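/- arXiv:2603.24516 — 5 statements merged into one kernel-verified Lean document; each statement's English description precedes it below -/
import Mathlib

section
/- Let C be a delay-free, non-catastrophic (n,k,δ) convolutional code over F_q. Then the free distance equals the limit of the column distances: d_free(C) = lim_{j→∞} d_j^c(C). (Equivalently, since the column distances are a non-decreasing integer sequence bounded by d_free, they are eventually constant equal to d_free.) -/
open Polynomial Matrix

noncomputable def wtTrunc {F : Type*} [Field F] {n : ℕ} (j : ℕ)
    (v : Fin n → Polynomial F) : ℕ :=
  {p : ℕ × Fin n | p.1 ≤ j ∧ (v p.2).coeff p.1 ≠ 0}.ncard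

noncomputable def wtFull {F : Type*} [Field F] {n : ℕ} (v : Fin n → Polynomial F) : ℕ :=
  {p : ℕ × Fin n | (v p.2).coeff p.1 ≠ 0}.ncard

noncomputable def colDist {F : Type*} [Field F] {n : ℕ}
    (C : Submodule (Polynomial F) (Fin n → Polynomial F)) (j : ℕ) : ℕ :=
  sInf {w | ∃ v ∈ C, (fun t => (v t).coeff 0) ≠ (0 : Fin n → F) ∧ w = wtTrunc j v}

noncomputable def freeDist {F : Type*} [Field F] {n : ℕ}
    (C : Submodule (Polynomial F) (Fin n → Polynomial F)) : ℕ :=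
  sInf {w | ∃ v ∈ C, v ≠ 0 ∧ w = wtFull v}

def IsEncoder {F : Type*} [Field F] {k n : ℕ}
    (C : Submodule (Polynomial F) (Fin n → Polynomial F))
    (G : Matrix (Fin k) (Fin n) (Polynomial F)) : Prop :=
  LinearIndependent (Polynomial F) (fun i : Fin k => fun t => G i t) ∧
    Submodule.span (Polynomial F) (Set.range (fun i : Fin k => fun t => G i t)) = C

def IsDelayFree {F : Type*} [Field F] {k n : ℕ}
    (G : Matrix (Fin k) (Fin n) (Polynomial F)) : Prop :=
  LinearIndependent F (fun i : Fin k => fun t => (G i t).coeff 0)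

noncomputable def codeDegree {F : Type*} [Field F] {k n : ℕ}
    (G : Matrix (Fin k) (Fin n) (Polynomial F)) : ℕ :=
  Finset.univ.sup fun φ : Fin k → Fin n => ((G.submatrix id φ).det).natDegree

noncomputable def rowDegSum {F : Type*} [Field F] {k n : ℕ}
    (G : Matrix (Fin k) (Fin n) (Polynomial F)) : ℕ :=
  ∑ i : Fin k, Finset.univ.sup fun t : Fin n => (G i t).natDegree

noncomputable def Gcoeff {F : Type*} [Field F] {k n : ℕ}
    (G : Matrix (Fin k) (Fin n) (Polynomial F)) (i : ℕ) : Matrix (Fin k) (Fin n) F :=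
  fun a b => (G a b).coeff i

/-!
Non-catastrophicity gives a polynomial right inverse `P` of the encoder `G`, so `C` is the fixed
space of `v ↦ v (P G)` and is closed under division by powers of `X`. Dividing a codeword of minimal
weight by the largest power of `X` it is divisible by gives a codeword with `v₀ ≠ 0` of the same
weight, hence `d_j^c ≤ d_free` for every `j`.

Conversely, let `D` bound the degrees of the entries of `P G`. A codeword with `v₀ ≠ 0` and fewer
than `d_free` nonzero coefficients in degrees `≤ j`, where `j + 1 ≥ d_free (D + 1)`, must have a gap
of `D` consecutive zero coefficients below degree `j`. Since `P G` cannot carry information across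
such a gap, truncating `v` in front of it yields a nonzero codeword of weight `< d_free`.
-/

open scoped PowerSeries

namespace Matrix

variable {R : Type*} [CommRing R] {m ι : Type*} [Fintype m] [DecidableEq m] [Fintype ι]

theorem exists_mul_eq_one_of_span_det_submatrix_eq_top [DecidableEq ι] (G : Matrix m ι R)
    (h : Ideal.span {d | ∃ φ : m → ι, d = (G.submatrix id φ).det} = ⊤) :
    ∃ P : Matrix ι m R, G * P = 1 := by
  let I : Ideal R :=
    { carrier := {d | ∃ P : Matrix ι m R, G * P = d • 1}
      add_mem' := by
        rintro _ _ ⟨P, hP⟩ ⟨Q, hQ⟩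
        exact ⟨P + Q, by rw [Matrix.mul_add, hP, hQ, add_smul]⟩
      zero_mem' := ⟨0, by simp⟩
      smul_mem' := by
        rintro c _ ⟨P, hP⟩
        exact ⟨c • P, by rw [Matrix.mul_smul, hP, smul_smul, smul_eq_mul]⟩ }
  have hI : Ideal.span {d | ∃ φ : m → ι, d = (G.submatrix id φ).det} ≤ I := by
    refine Ideal.span_le.2 ?_
    rintro _ ⟨φ, rfl⟩
    refine ⟨(1 : Matrix ι ι R).submatrix (Equiv.refl ι) φ * adjugate (G.submatrix id φ), ?_⟩
    rw [← Matrix.mul_assoc, mul_submatrix_one]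
    exact mul_adjugate _
  obtain ⟨P, hP⟩ := hI (h ▸ Submodule.mem_top : (1 : R) ∈ _)
  exact ⟨P, by simpa using hP⟩

theorem mem_span_range_row_iff_vecMul_mul_eq_self {G : Matrix m ι R} {P : Matrix ι m R}
    (hGP : G * P = 1) (v : ι → R) :
    v ∈ Submodule.span R (Set.range G.row) ↔ v ᵥ* (P * G) = v := by
  rw [← range_vecMulLinear, LinearMap.mem_range]
  constructor
  · rintro ⟨u, rfl⟩
    simp [vecMul_vecMul, ← Matrix.mul_assoc, hGP]
  · exact fun h => ⟨v ᵥ* P, by simpa [vecMul_vecMul] using h⟩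

end Matrix

namespace Polynomial

variable {R : Type*} [CommRing R] {ι : Type*}

theorem mem_of_smul_mem_of_iff_vecMul_eq_self [Fintype ι] [IsDomain R]
    {C : Submodule R[X] (ι → R[X])} {E : Matrix ι ι R[X]} (hC : ∀ v, v ∈ C ↔ v ᵥ* E = v)
    {c : R[X]} (hc : c ≠ 0) {w : ι → R[X]} (h : c • w ∈ C) : w ∈ C := by
  rw [hC, Matrix.smul_vecMul] at h
  exact (hC w).2 (smul_right_injective _ hc h)

theorem exists_eq_X_pow_smul_of_ne_zero {v : ι → R[X]} (hv : v ≠ 0) :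
    ∃ (m : ℕ) (w : ι → R[X]), v = (X : R[X]) ^ m • w ∧ (fun t => (w t).coeff 0) ≠ 0 := by
  classical
  have hex : ∃ c, ∃ s, (v s).coeff c ≠ 0 := by
    obtain ⟨s, hs⟩ := Function.ne_iff.1 hv
    obtain ⟨c, hc⟩ := not_forall.1 (Polynomial.ext_iff.not.1 hs)
    exact ⟨c, s, hc⟩
  have hdvd : ∀ s, X ^ Nat.find hex ∣ v s := fun s =>
    X_pow_dvd_iff.2 fun c hc => not_not.1 fun h => Nat.find_min hex hc ⟨s, h⟩
  choose w hw using hdvd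
  refine ⟨Nat.find hex, w, _root_.funext hw, fun h0 => ?_⟩
  obtain ⟨s, hs⟩ := Nat.find_spec hex
  rw [hw s, coeff_X_pow_mul', if_pos le_rfl, Nat.sub_self] at hs
  exact hs (congrFun h0 s)

/-- The defect `u ᵥ* E - u` of the truncation `u` equals `(u - v) ᵥ* E - (u - v)`, hence is
divisible by `X ^ (a + D + 1)`, yet it has degree at most `a + D`. -/
theorem vecMul_trunc_eq_self_of_coeff_eq_zero [Fintype ι] [IsDomain R] {E : Matrix ι ι R[X]}
    {D : ℕ} (hE : ∀ s t, (E s t).natDegree ≤ D) {v : ι → R[X]} (hv : v ᵥ* E = v) {a : ℕ}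
    (hgap : ∀ s c, a < c → c ≤ a + D → (v s).coeff c = 0) :
    (fun s => PowerSeries.trunc (a + 1) (v s : R⟦X⟧)) ᵥ* E =
      fun s => PowerSeries.trunc (a + 1) (v s : R⟦X⟧) := by
  set u : ι → R[X] := fun s => PowerSeries.trunc (a + 1) (v s : R⟦X⟧)
  have hu : ∀ s, (u s).natDegree ≤ a := fun s =>
    Nat.lt_succ_iff.1 (PowerSeries.natDegree_trunc_lt _ a)
  have hdvd : ∀ s, X ^ (a + D + 1) ∣ u s - v s := fun s => X_pow_dvd_iff.2 fun c hc => by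
    by_cases hca : c < a + 1
    · simp [u, PowerSeries.coeff_trunc, hca]
    · simp [u, PowerSeries.coeff_trunc, hca, hgap s c (by omega) (by omega)]
  refine _root_.funext fun t => ?_
  rw [← sub_eq_zero]
  apply eq_zero_of_dvd_of_natDegree_lt (p := X ^ (a + D + 1))
  · have : (u ᵥ* E) t - u t = ((u - v) ᵥ* E) t - (u - v) t := by
      rw [Matrix.sub_vecMul, hv]; simp
    rw [this, Matrix.vecMul, dotProduct]
    exact dvd_sub (Finset.dvd_sum fun s _ => (hdvd s).mul_right _) (hdvd t)
  · rw [natDegree_X_pow, Nat.lt_succ_iff]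
    refine (natDegree_sub_le _ _).trans (max_le ?_ ((hu t).trans (Nat.le_add_right a D)))
    exact natDegree_sum_le_of_forall_le _ _ fun s _ => natDegree_mul_le_of_le (hu s) (hE s t)

end Polynomial

section Weights

variable {F : Type*} [Field F] {n : ℕ}

theorem finite_setOf_coeff_ne_zero (v : Fin n → F[X]) :
    {p : ℕ × Fin n | (v p.2).coeff p.1 ≠ 0}.Finite :=
  ((Set.finite_iUnion fun s => (v s).support.finite_toSet).prod Set.finite_univ).subset
    fun p hp => ⟨Set.mem_iUnion.2 ⟨p.2, by simpa using hp⟩, trivial⟩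

theorem wtTrunc_le_wtFull (j : ℕ) (v : Fin n → F[X]) : wtTrunc j v ≤ wtFull v :=
  Set.ncard_le_ncard (fun _ hp => hp.2) (finite_setOf_coeff_ne_zero v)

theorem wtFull_X_pow_smul (m : ℕ) (w : Fin n → F[X]) : wtFull ((X : F[X]) ^ m • w) = wtFull w := by
  have h : {p : ℕ × Fin n | (((X : F[X]) ^ m • w) p.2).coeff p.1 ≠ 0} =
      (fun p : ℕ × Fin n => (p.1 + m, p.2)) '' {p | (w p.2).coeff p.1 ≠ 0} := by
    ext ⟨c, s⟩
    simp only [Set.mem_ofPred_eq, Pi.smul_apply, smul_eq_mul, coeff_X_pow_mul', Set.mem_image,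
      Prod.mk.injEq, Prod.exists]
    constructor
    · intro hc
      have hmc : m ≤ c := by by_contra h; simp [h] at hc
      exact ⟨c - m, s, by simpa [hmc] using hc, by omega, rfl⟩
    · rintro ⟨c, s, hc, rfl, rfl⟩
      simpa using hc
  rw [wtFull, h, Set.ncard_image_of_injective _ fun p q hpq => by
    simp only [Prod.mk.injEq] at hpq; exact Prod.ext (by omega) hpq.2]
  rfl

theorem wtFull_trunc_le_wtTrunc {a j : ℕ} (h : a ≤ j) (v : Fin n → F[X]) :
    wtFull (fun s => PowerSeries.trunc (a + 1) (v s : F⟦X⟧)) ≤ wtTrunc j v := by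
  refine Set.ncard_le_ncard (fun p hp => ?_)
    ((finite_setOf_coeff_ne_zero v).subset fun _ hp => hp.2)
  obtain ⟨hpa, hp⟩ : p.1 ≤ a ∧ (v p.2).coeff p.1 ≠ 0 := by simpa [PowerSeries.coeff_trunc] using hp
  exact ⟨hpa.trans h, hp⟩

/-- Pigeonhole on the blocks `[m (D + 1), m (D + 1) + D]` with `m < d`; the empty block is not the
first one because `v₀ ≠ 0`. -/
theorem exists_gap_of_wtTrunc_lt {v : Fin n → F[X]} (hv0 : (fun t => (v t).coeff 0) ≠ 0)
    {d D j : ℕ} (hlt : wtTrunc j v < d) (hj : d * (D + 1) ≤ j + 1) :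
    ∃ a ≤ j, ∀ s c, a < c → c ≤ a + D → (v s).coeff c = 0 := by
  set S := {p : ℕ × Fin n | p.1 ≤ j ∧ (v p.2).coeff p.1 ≠ 0}
  have hS : S.Finite := (finite_setOf_coeff_ne_zero v).subset fun _ hp => hp.2
  have hcard : ((fun p : ℕ × Fin n => p.1 / (D + 1)) '' S).ncard < (Set.Iio d).ncard := by
    rw [Set.ncard_Iio_nat]
    exact (Set.ncard_image_le hS).trans_lt hlt
  obtain ⟨m, hmd, hm⟩ := Set.exists_mem_notMem_of_ncard_lt_ncard hcard (hS.image _)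
  obtain ⟨s₀, hs₀⟩ := Function.ne_iff.1 hv0
  obtain ⟨m, rfl⟩ : ∃ m', m = m' + 1 :=
    Nat.exists_eq_add_one.2 <| Nat.pos_of_ne_zero fun hm0 =>
      hm ⟨(0, s₀), ⟨Nat.zero_le j, hs₀⟩, by simp [hm0]⟩
  have hblock : (m + 2) * (D + 1) ≤ d * (D + 1) := Nat.mul_le_mul_right _ (Set.mem_Iio.1 hmd)
  refine ⟨m * (D + 1) + D, by nlinarith, fun s c hc₁ hc₂ => not_not.1 fun hc => hm ?_⟩
  refine ⟨(c, s), ⟨by nlinarith, hc⟩, Nat.div_eq_of_lt_le (by nlinarith) (by nlinarith)⟩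

end Weights

theorem Nat.sInf_le_sInf_of_forall_le {A B : Set ℕ} (hBA : B.Nonempty → A.Nonempty)
    (h : ∀ a ∈ A, sInf B ≤ a) : sInf B ≤ sInf A := by
  rcases A.eq_empty_or_nonempty with rfl | hA
  · rw [Set.not_nonempty_iff_eq_empty.1 fun hB => (hBA hB).ne_empty rfl]
  · exact le_csInf hA h

section ColumnDistances

variable {F : Type*} [Field F] {n : ℕ} {C : Submodule F[X] (Fin n → F[X])}
  {E : Matrix (Fin n) (Fin n) F[X]}

theorem exists_mem_coeff_zero_ne_zero_wtFull_eq (hC : ∀ v, v ∈ C ↔ v ᵥ* E = v)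
    {v : Fin n → F[X]} (hv : v ∈ C) (hv0 : v ≠ 0) :
    ∃ w ∈ C, (fun t => (w t).coeff 0) ≠ 0 ∧ wtFull w = wtFull v := by
  obtain ⟨m, w, rfl, hw0⟩ := exists_eq_X_pow_smul_of_ne_zero hv0
  exact ⟨w, mem_of_smul_mem_of_iff_vecMul_eq_self hC (pow_ne_zero m X_ne_zero) hv, hw0,
    (wtFull_X_pow_smul m w).symm⟩

theorem colDist_le_freeDist (hC : ∀ v, v ∈ C ↔ v ᵥ* E = v) (j : ℕ) :
    colDist C j ≤ freeDist C := by
  refine Nat.sInf_le_sInf_of_forall_le ?_ ?_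
  · rintro ⟨_, v, hv, hv0, rfl⟩
    exact ⟨_, v, hv, fun h => hv0 (by subst h; rfl), rfl⟩
  · rintro _ ⟨v, hv, hv0, rfl⟩
    obtain ⟨w, hw, hw0, hwv⟩ := exists_mem_coeff_zero_ne_zero_wtFull_eq hC hv hv0
    calc colDist C j ≤ wtTrunc j w := Nat.sInf_le ⟨w, hw, hw0, rfl⟩
      _ ≤ wtFull w := wtTrunc_le_wtFull j w
      _ = wtFull v := hwv

theorem freeDist_le_wtTrunc (hC : ∀ v, v ∈ C ↔ v ᵥ* E = v) {D : ℕ}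
    (hE : ∀ s t, (E s t).natDegree ≤ D) {v : Fin n → F[X]} (hv : v ∈ C)
    (hv0 : (fun t => (v t).coeff 0) ≠ 0) {j : ℕ} (hj : freeDist C * (D + 1) ≤ j + 1) :
    freeDist C ≤ wtTrunc j v := by
  by_contra! hlt
  obtain ⟨a, haj, hgap⟩ := exists_gap_of_wtTrunc_lt hv0 hlt hj
  set u : Fin n → F[X] := fun s => PowerSeries.trunc (a + 1) (v s : F⟦X⟧)
  have hu : u ∈ C := (hC u).2 (vecMul_trunc_eq_self_of_coeff_eq_zero hE ((hC v).1 hv) hgap)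
  have hu0 : u ≠ 0 := fun h => hv0 <| funext fun t => by
    simpa [u, PowerSeries.coeff_trunc] using congrArg (coeff · 0) (congrFun h t)
  have hfree : freeDist C ≤ wtFull u := Nat.sInf_le ⟨u, hu, hu0, rfl⟩
  have htrunc : wtFull u ≤ wtTrunc j v := wtFull_trunc_le_wtTrunc haj v
  omega

theorem freeDist_le_colDist (hC : ∀ v, v ∈ C ↔ v ᵥ* E = v) {D : ℕ}
    (hE : ∀ s t, (E s t).natDegree ≤ D) {j : ℕ} (hj : freeDist C * (D + 1) ≤ j + 1) :
    freeDist C ≤ colDist C j := by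
  refine Nat.sInf_le_sInf_of_forall_le ?_ ?_
  · rintro ⟨_, v, hv, hv0, rfl⟩
    obtain ⟨w, hw, hw0, -⟩ := exists_mem_coeff_zero_ne_zero_wtFull_eq hC hv hv0
    exact ⟨_, w, hw, hw0, rfl⟩
  · rintro _ ⟨v, hv, hv0, rfl⟩
    exact freeDist_le_wtTrunc hC hE hv hv0 hj

end ColumnDistances

theorem stmt5_general {F : Type*} [Field F] {n k : ℕ}
    (C : Submodule (Polynomial F) (Fin n → Polynomial F))
    (G : Matrix (Fin k) (Fin n) (Polynomial F))
    (hG : IsEncoder C G)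
    (hnc : Ideal.span
      {m : Polynomial F | ∃ φ : Fin k → Fin n, m = (G.submatrix id φ).det} = ⊤) :
    ∃ N : ℕ, ∀ j ≥ N, colDist C j = freeDist C := by
  obtain ⟨P, hGP⟩ := G.exists_mul_eq_one_of_span_det_submatrix_eq_top hnc
  have hC : ∀ v, v ∈ C ↔ v ᵥ* (P * G) = v := fun v => by
    rw [← hG.2]
    exact mem_span_range_row_iff_vecMul_mul_eq_self hGP v
  obtain ⟨D, hD⟩ := Finite.exists_le fun p : Fin n × Fin n => ((P * G) p.1 p.2).natDegree
  exact ⟨freeDist C * (D + 1), fun j hj => le_antisymm (colDist_le_freeDist hC j)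
    (freeDist_le_colDist hC (fun s t => hD (s, t)) (by omega))⟩

theorem stmt5 {F : Type*} [Field F] [Fintype F] {n k δ : ℕ}
    (C : Submodule (Polynomial F) (Fin n → Polynomial F))
    (G : Matrix (Fin k) (Fin n) (Polynomial F))
    (hG : IsEncoder C G) (hdf : IsDelayFree G) (hdeg : codeDegree G = δ)
    (hnc : Ideal.span
      {m : Polynomial F | ∃ φ : Fin k → Fin n, m = (G.submatrix id φ).det} = ⊤) :
    ∃ N : ℕ, ∀ j ≥ N, colDist C j = freeDist C :=
  stmt5_general C G hG hnc
end

section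
/- Let C be a delay-free (n,k,δ) convolutional code over F_q. For every j ≥ 0, the j-th column distance satisfies d_j^c(C) ≤ (n−k)(j+1) + 1. -/
open Polynomial Matrix

/-!
Delay-freeness makes the depth-`j` sliding generator matrix injective (a nonzero input has a
lowest nonzero coefficient level, where the output is a nontrivial combination of the rows of
`G(0)`), so the truncated code `U` has dimension `(j + 1) k`, and the truncated codewords with
vanishing constant term form a proper subspace `V` of it. Padding an information set of `V` to
`(j + 1) k - 1` coordinates, some nonzero `x ∈ U` vanishes on all of them; it lies outside `V`,
i.e. comes from a codeword with `v₀ ≠ 0`, and has weight at most `(j + 1)(n - k) + 1`.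
-/

open Module Finset

section InformationSet

variable {F ι : Type*} [Field F] [Fintype ι]

theorem Submodule.exists_finset_card_le_finrank_eq_zero_of_forall_eq_zero
    (V : Submodule F (ι → F)) :
    ∃ S : Finset ι, #S ≤ finrank F V ∧ ∀ v ∈ V, (∀ i ∈ S, v i = 0) → v = 0 := by
  classical
  induction hd : finrank F V using Nat.strong_induction_on generalizing V with
  | _ d ih =>
  rcases eq_or_ne V ⊥ with rfl | hV
  · exact ⟨∅, by simp, fun v hv _ => (Submodule.mem_bot F).1 hv⟩
  obtain ⟨v, hvV, hv0⟩ := Submodule.exists_mem_ne_zero_of_ne_bot hV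
  obtain ⟨i, hi⟩ := Function.ne_iff.1 hv0
  set V' := V ⊓ LinearMap.ker (LinearMap.proj i : (ι → F) →ₗ[F] F)
  have hV' : finrank F V' < d :=
    hd ▸ Submodule.finrank_lt_finrank_of_lt (inf_lt_left.2 fun h => hi (h hvV))
  obtain ⟨S, hS, hSV⟩ := ih _ hV' V' rfl
  refine ⟨insert i S, (card_insert_le _ _).trans (by omega), fun w hw hwS => ?_⟩
  exact hSV w ⟨hw, hwS i (mem_insert_self i S)⟩ fun i' hi' => hwS i' (mem_insert_of_mem hi')

theorem Submodule.exists_mem_notMem_card_support_le [DecidableEq F] {U V : Submodule F (ι → F)}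
    (hVU : V < U) :
    ∃ x ∈ U, x ∉ V ∧ #{i | x i ≠ 0} ≤ Fintype.card ι - finrank F U + 1 := by
  classical
  obtain ⟨S₀, hS₀, hS₀V⟩ := V.exists_finset_card_le_finrank_eq_zero_of_forall_eq_zero
  have hVU' := Submodule.finrank_lt_finrank_of_lt hVU
  have hU : finrank F U ≤ Fintype.card ι := by simpa using U.finrank_le
  obtain ⟨S, hS₀S, hS⟩ := exists_superset_card_eq (s := S₀) (n := finrank F U - 1)
    (by omega) (by omega)
  let restrict : U →ₗ[F] (S → F) := (LinearMap.funLeft F F ((↑) : S → ι)).comp U.subtype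
  have hker : LinearMap.ker restrict ≠ ⊥ := fun h => by
    have := LinearMap.finrank_le_finrank_of_injective (LinearMap.ker_eq_bot.1 h)
    simp only [finrank_fintype_fun_eq_card, Fintype.card_coe] at this
    omega
  obtain ⟨⟨x, hxU⟩, hxS, hx0⟩ := Submodule.exists_mem_ne_zero_of_ne_bot hker
  have hxS : ∀ i ∈ S, x i = 0 := fun i hi => congr_fun hxS ⟨i, hi⟩
  refine ⟨x, hxU, fun hxV => hx0 (Subtype.ext (hS₀V x hxV fun i hi => hxS i (hS₀S hi))), ?_⟩
  calc #{i | x i ≠ 0} ≤ #Sᶜ :=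
        card_le_card fun i hi => by simpa using mt (hxS i) (by simpa using hi)
    _ = Fintype.card ι - finrank F U + 1 := by rw [card_compl, hS]; omega

end InformationSet

namespace ConvolutionalCode

variable {F : Type*} [Field F] {n k : ℕ}

variable (n) in
def truncate (j : ℕ) : (Fin n → F[X]) →ₗ[F] (Fin (j + 1) × Fin n → F) where
  toFun v p := (v p.2).coeff p.1
  map_add' v w := by ext; simp
  map_smul' c v := by ext; simp

theorem wtTrunc_eq_card_truncate_ne_zero [DecidableEq F] (j : ℕ) (v : Fin n → F[X]) :
    wtTrunc j v = #{p | truncate n j v p ≠ 0} := by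
  rw [wtTrunc, ← Set.ncard_coe_finset,
    ← Set.ncard_image_of_injective _ (f := fun p : Fin (j + 1) × Fin n => ((p.1 : ℕ), p.2))
      fun p q h => by simpa [Prod.ext_iff, Fin.ext_iff] using h]
  congr 1
  ext ⟨a, t⟩
  simp only [coe_filter, mem_univ, true_and, Set.mem_image, Set.mem_ofPred_eq, Prod.mk.injEq]
  constructor
  · rintro ⟨ha, hv⟩
    exact ⟨(⟨a, Nat.lt_succ_iff.2 ha⟩, t), hv, rfl, rfl⟩
  · rintro ⟨p, hp, rfl, rfl⟩
    exact ⟨Nat.lt_succ_iff.1 p.1.2, hp⟩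

theorem colDist_bot (j : ℕ) : colDist (⊥ : Submodule F[X] (Fin n → F[X])) j = 0 := by
  rw [colDist, Nat.sInf_eq_zero]
  refine Or.inr (Set.eq_empty_of_forall_notMem ?_)
  rintro w ⟨v, hv, hv0, -⟩
  rw [Submodule.mem_bot] at hv
  subst hv
  exact hv0 (funext fun t => by simp)

noncomputable def shiftedRow (j : ℕ) (G : Matrix (Fin k) (Fin n) F[X])
    (q : Fin (j + 1) × Fin k) : Fin n → F[X] :=
  fun t => X ^ (q.1 : ℕ) * G q.2 t

theorem shiftedRow_mem {C : Submodule F[X] (Fin n → F[X])} {G : Matrix (Fin k) (Fin n) F[X]}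
    (hG : IsEncoder C G) (j : ℕ) (q : Fin (j + 1) × Fin k) : shiftedRow j G q ∈ C := by
  rw [← hG.2]
  exact Submodule.smul_mem _ _ (Submodule.subset_span (Set.mem_range_self q.2))

theorem coeff_sum_smul_shiftedRow {j : ℕ} (G : Matrix (Fin k) (Fin n) F[X])
    (g : Fin (j + 1) × Fin k → F) (a : Fin (j + 1)) (t : Fin n)
    (hg : ∀ b < a, ∀ i, g (b, i) = 0) :
    ((∑ q, g q • shiftedRow j G q) t).coeff a = ∑ i, g (a, i) * (G i t).coeff 0 := by
  simp only [Finset.sum_apply, Pi.smul_apply, shiftedRow, smul_eq_mul, finsetSum_coeff,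
    coeff_smul]
  rw [Fintype.sum_prod_type, Finset.sum_eq_single a]
  · simp [coeff_X_pow_mul']
  · intro b _ hba
    rcases lt_or_gt_of_ne hba with h | h
    · simp [hg b h]
    · simp [coeff_X_pow_mul', not_le.2 (Fin.lt_def.1 h)]
  · simp

theorem linearIndependent_truncate_shiftedRow {G : Matrix (Fin k) (Fin n) F[X]}
    (hdf : IsDelayFree G) (j : ℕ) : LinearIndependent F (truncate n j ∘ shiftedRow j G) := by
  rw [Fintype.linearIndependent_iff]
  intro g hg
  simp only [Function.comp_apply, ← map_smul, ← map_sum] at hg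
  have hlevel (a : Fin (j + 1)) (hlow : ∀ b < a, ∀ i, g (b, i) = 0) : ∀ i, g (a, i) = 0 := by
    refine Fintype.linearIndependent_iff.1 hdf _ (funext fun t => ?_)
    have h : ((∑ q, g q • shiftedRow j G q) t).coeff a = 0 := congr_fun hg (a, t)
    rw [coeff_sum_smul_shiftedRow G g a t hlow] at h
    simpa [Finset.sum_apply] using h
  exact fun q => WellFoundedLT.induction (motive := fun a => ∀ i, g (a, i) = 0) q.1 hlevel q.2

def truncatedCode (j : ℕ) (G : Matrix (Fin k) (Fin n) F[X]) :
    Submodule F (Fin (j + 1) × Fin n → F) :=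
  Submodule.span F (Set.range (truncate n j ∘ shiftedRow j G))

theorem finrank_truncatedCode {G : Matrix (Fin k) (Fin n) F[X]} (hdf : IsDelayFree G) (j : ℕ) :
    finrank F (truncatedCode j G) = (j + 1) * k := by
  rw [truncatedCode, finrank_span_eq_card (linearIndependent_truncate_shiftedRow hdf j)]
  simp

theorem exists_eq_truncate_of_mem_truncatedCode {C : Submodule F[X] (Fin n → F[X])}
    {G : Matrix (Fin k) (Fin n) F[X]} (hG : IsEncoder C G) {j : ℕ}
    {x : Fin (j + 1) × Fin n → F} (hx : x ∈ truncatedCode j G) :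
    ∃ v ∈ C, truncate n j v = x := by
  have : truncatedCode j G ≤ (C.restrictScalars F).map (truncate n j) :=
    Submodule.span_le.2 <| Set.range_subset_iff.2 fun q => ⟨_, shiftedRow_mem hG j q, rfl⟩
  simpa using this hx

variable (n) in
def constCoeff (j : ℕ) : (Fin (j + 1) × Fin n → F) →ₗ[F] (Fin n → F) :=
  LinearMap.funLeft F F fun t => (0, t)

theorem truncatedCode_inf_ker_constCoeff_lt [Nonempty (Fin k)]
    {G : Matrix (Fin k) (Fin n) F[X]} (hdf : IsDelayFree G) (j : ℕ) :
    truncatedCode j G ⊓ LinearMap.ker (constCoeff n j) < truncatedCode j G := by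
  refine inf_lt_left.2 fun h => ?_
  let i : Fin k := Classical.arbitrary _
  have h0 := LinearMap.mem_ker.1 (h (Submodule.subset_span (Set.mem_range_self (0, i))))
  exact hdf.ne_zero i (funext fun t => by
    simpa [constCoeff, truncate, shiftedRow] using congr_fun h0 t)

end ConvolutionalCode

open ConvolutionalCode

theorem stmt8_general {F : Type*} [Field F] {n k : ℕ}
    (C : Submodule (Polynomial F) (Fin n → Polynomial F))
    (G : Matrix (Fin k) (Fin n) (Polynomial F))
    (hG : IsEncoder C G) (hdf : IsDelayFree G) :
    ∀ j : ℕ, colDist C j ≤ (n - k) * (j + 1) + 1 := by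
  classical
  intro j
  rcases isEmpty_or_nonempty (Fin k) with _ | _
  · have hC : C = ⊥ := by rw [← hG.2, Set.range_eq_empty, Submodule.span_empty]
    simp [hC, colDist_bot]
  obtain ⟨x, hxU, hx0, hwt⟩ :=
    Submodule.exists_mem_notMem_card_support_le (truncatedCode_inf_ker_constCoeff_lt hdf j)
  obtain ⟨v, hvC, rfl⟩ := exists_eq_truncate_of_mem_truncatedCode hG hxU
  have hv0 : (fun t => (v t).coeff 0) ≠ 0 := fun h => hx0 ⟨hxU, h⟩
  calc colDist C j ≤ wtTrunc j v := Nat.sInf_le ⟨v, hvC, hv0, rfl⟩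
    _ = #{p | truncate n j v p ≠ 0} := wtTrunc_eq_card_truncate_ne_zero j v
    _ ≤ (j + 1) * n - (j + 1) * k + 1 := by simpa [finrank_truncatedCode hdf j] using hwt
    _ = (n - k) * (j + 1) + 1 := by rw [← Nat.mul_sub, mul_comm]

theorem stmt8 {F : Type*} [Field F] [Fintype F] {n k δ : ℕ} (hkn : k ≤ n)
    (C : Submodule (Polynomial F) (Fin n → Polynomial F))
    (G : Matrix (Fin k) (Fin n) (Polynomial F))
    (hG : IsEncoder C G) (hdf : IsDelayFree G) (hdeg : codeDegree G = δ) :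
    ∀ j : ℕ, colDist C j ≤ (n - k) * (j + 1) + 1 :=
  stmt8_general C G hG hdf
end

section
/- Let C be a delay-free (n,k,δ) convolutional code. If d_j^c(C) = (n−k)(j+1)+1 for some j, then d_i^c(C) = (n−k)(i+1)+1 for all i ≤ j. In other words, attaining the generalized Singleton column-distance bound at index j forces it at all smaller indices. -/
open Polynomial Matrix

/-! Choose `k` positions `φ` on which the constant coefficient matrix `G(0)` is invertible.
Then any codeword can be modified from time `m` on so that its coefficient at time `m` vanishes
on `φ`, hence costs at most `n - k`; iterating gives `d_{i+d} ≤ d_i + (n - k) d`. Starting from a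
codeword whose constant term is a unit vector on `φ` gives the Singleton bound
`d_i ≤ (n - k)(i + 1) + 1`, and with `d_j = (n - k)(j + 1) + 1` the two bounds force equality. -/

open Finset

theorem Matrix.exists_isUnit_submatrix_of_linearIndependent_row {K m n : Type*} [Field K]
    [Fintype m] [DecidableEq m] [Fintype n] {A : Matrix m n K} (hA : LinearIndependent K A.row) :
    ∃ φ : m → n, Function.Injective φ ∧ IsUnit (A.submatrix id φ) := by
  obtain ⟨κ, c, hc, hspan, hli⟩ := exists_linearIndependent' K A.col
  have htop : Submodule.span K (Set.range A.col) = ⊤ := by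
    apply Submodule.eq_top_of_finrank_eq
    rw [← rank_eq_finrank_span_cols, hA.rank_matrix, Module.finrank_fintype_fun_eq_card]
  let e : κ ≃ m := (Module.Basis.mk hli (by rw [hspan, htop])).indexEquiv (Pi.basisFun K m)
  refine ⟨c ∘ e.symm, hc.comp e.symm.injective, ?_⟩
  rw [← linearIndependent_cols_iff_isUnit]
  exact hli.comp e.symm e.symm.injective

theorem Finset.card_filter_ne_zero_add_card_filter_comp_eq_zero_le {ι κ M : Type*}
    [Fintype ι] [Fintype κ] [DecidableEq ι] [Zero M] [DecidableEq M] {φ : κ → ι}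
    (hφ : Function.Injective φ) (g : ι → M) :
    #{t | g t ≠ 0} + #{a | g (φ a) = 0} ≤ Fintype.card ι := by
  rw [← card_image_of_injective _ hφ, ← card_union_of_disjoint]
  · exact card_le_univ _
  · rw [disjoint_left]
    intro t ht ht'
    obtain ⟨a, ha, rfl⟩ := mem_image.1 ht'
    exact (mem_filter.1 ht).2 (mem_filter.1 ha).2

section Support

variable {M : Type*} [Zero M] [DecidableEq M] {n k : ℕ} {φ : Fin k → Fin n}

lemma card_filter_ne_zero_le_of_injective (hφ : Function.Injective φ) {g : Fin n → M}
    (hg : ∀ a, g (φ a) = 0) : #{t | g t ≠ 0} ≤ n - k := by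
  have := card_filter_ne_zero_add_card_filter_comp_eq_zero_le hφ g
  rw [filter_true_of_mem fun a _ => hg a, card_univ, Fintype.card_fin, Fintype.card_fin] at this
  omega

lemma card_filter_ne_zero_le_succ_of_injective (hφ : Function.Injective φ) (a₀ : Fin k)
    {g : Fin n → M} (hg : ∀ a ≠ a₀, g (φ a) = 0) : #{t | g t ≠ 0} ≤ n - k + 1 := by
  have := card_filter_ne_zero_add_card_filter_comp_eq_zero_le hφ g
  have hzeros : #(univ.erase a₀) ≤ #{a | g (φ a) = 0} :=
    card_le_card fun a ha => mem_filter.2 ⟨mem_univ a, hg a (ne_of_mem_erase ha)⟩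
  rw [card_erase_of_mem (mem_univ a₀), card_univ, Fintype.card_fin] at hzeros
  rw [Fintype.card_fin] at this
  have := a₀.pos
  omega

end Support

section ColumnDistance

open scoped Classical

variable {F : Type*} [Field F] {n k : ℕ}

lemma wtTrunc_eq_sum (j : ℕ) (v : Fin n → F[X]) :
    wtTrunc j v = ∑ m ∈ range (j + 1), #{t | (v t).coeff m ≠ 0} := by
  have : {p : ℕ × Fin n | p.1 ≤ j ∧ (v p.2).coeff p.1 ≠ 0} =
      ↑({p ∈ range (j + 1) ×ˢ (univ : Finset (Fin n)) | (v p.2).coeff p.1 ≠ 0}) := by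
    ext p
    simp
  rw [wtTrunc, this, Set.ncard_coe_finset, card_filter, sum_product]
  simp_rw [card_filter]

lemma wtTrunc_zero (v : Fin n → F[X]) : wtTrunc 0 v = #{t | (v t).coeff 0 ≠ 0} := by
  rw [wtTrunc_eq_sum, sum_range_one]

lemma wtTrunc_succ (j : ℕ) (v : Fin n → F[X]) :
    wtTrunc (j + 1) v = wtTrunc j v + #{t | (v t).coeff (j + 1) ≠ 0} := by
  rw [wtTrunc_eq_sum, wtTrunc_eq_sum, sum_range_succ]

lemma wtTrunc_congr {j : ℕ} {v w : Fin n → F[X]}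
    (h : ∀ l ≤ j, ∀ t, (v t).coeff l = (w t).coeff l) : wtTrunc j v = wtTrunc j w := by
  rw [wtTrunc_eq_sum, wtTrunc_eq_sum]
  refine sum_congr rfl fun l hl => ?_
  simp_rw [h l (Nat.lt_succ_iff.1 (mem_range.1 hl))]

lemma colDist_le_wtTrunc {C : Submodule F[X] (Fin n → F[X])} {v : Fin n → F[X]} (hv : v ∈ C)
    (hv₀ : (fun t => (v t).coeff 0) ≠ 0) (j : ℕ) : colDist C j ≤ wtTrunc j v :=
  Nat.sInf_le ⟨v, hv, hv₀, rfl⟩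

lemma exists_wtTrunc_eq_colDist {C : Submodule F[X] (Fin n → F[X])} {v : Fin n → F[X]}
    (hv : v ∈ C) (hv₀ : (fun t => (v t).coeff 0) ≠ 0) (j : ℕ) :
    ∃ w ∈ C, (fun t => (w t).coeff 0) ≠ 0 ∧ wtTrunc j w = colDist C j := by
  obtain ⟨w, hw, hw₀, hwj⟩ := Nat.sInf_mem (s := {w | ∃ v ∈ C, (fun t => (v t).coeff 0) ≠ 0 ∧
    w = wtTrunc j v}) ⟨_, v, hv, hv₀, rfl⟩
  exact ⟨w, hw, hw₀, hwj.symm⟩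

lemma exists_mem_of_colDist_ne_zero {C : Submodule F[X] (Fin n → F[X])} {j : ℕ}
    (h : colDist C j ≠ 0) : ∃ v ∈ C, (fun t => (v t).coeff 0) ≠ 0 := by
  by_contra! hC
  refine h (Nat.sInf_eq_zero.2 (Or.inr (Set.eq_empty_of_forall_notMem ?_)))
  rintro _ ⟨v, hv, hv₀, -⟩
  exact hv₀ (hC v hv)

def IsInformationSet (C : Submodule F[X] (Fin n → F[X])) (φ : Fin k → Fin n) : Prop :=
  Function.Injective φ ∧ ∀ w : Fin k → F, ∃ c ∈ C, ∀ a, (c (φ a)).coeff 0 = w a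

namespace IsInformationSet

variable {C : Submodule F[X] (Fin n → F[X])} {φ : Fin k → Fin n}

lemma exists_extend (hφ : IsInformationSet C φ) {v : Fin n → F[X]} (hv : v ∈ C) (m : ℕ) :
    ∃ v' ∈ C, (∀ l < m, ∀ t, (v' t).coeff l = (v t).coeff l) ∧ ∀ a, (v' (φ a)).coeff m = 0 := by
  obtain ⟨c, hc, hc₀⟩ := hφ.2 fun a => -(v (φ a)).coeff m
  refine ⟨v + (X ^ m : F[X]) • c, C.add_mem hv (C.smul_mem _ hc), fun l hl t => ?_, fun a => ?_⟩
  · simp [coeff_X_pow_mul', hl.not_ge]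
  · simp [coeff_X_pow_mul', hc₀]

lemma exists_wtTrunc_add_le (hφ : IsInformationSet C φ) {v : Fin n → F[X]} (hv : v ∈ C)
    (i d : ℕ) : ∃ v' ∈ C, (∀ t, (v' t).coeff 0 = (v t).coeff 0) ∧
      wtTrunc (i + d) v' ≤ wtTrunc i v + (n - k) * d := by
  induction d with
  | zero => exact ⟨v, hv, fun _ => rfl, le_rfl⟩
  | succ d ih =>
    obtain ⟨v', hv', hv'₀, hv'wt⟩ := ih
    obtain ⟨v'', hv'', hagree, hpiv⟩ := hφ.exists_extend hv' (i + d + 1)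
    refine ⟨v'', hv'', fun t => (hagree 0 (by omega) t).trans (hv'₀ t), ?_⟩
    have hprefix : wtTrunc (i + d) v'' = wtTrunc (i + d) v' :=
      wtTrunc_congr fun l hl => hagree l (by omega)
    have hlast := card_filter_ne_zero_le_of_injective hφ.1 (g := fun t => (v'' t).coeff (i + d + 1)) hpiv
    rw [← add_assoc, wtTrunc_succ, hprefix]
    linarith

lemma colDist_add_le (hφ : IsInformationSet C φ) {v : Fin n → F[X]} (hv : v ∈ C)
    (hv₀ : (fun t => (v t).coeff 0) ≠ 0) (i d : ℕ) :
    colDist C (i + d) ≤ colDist C i + (n - k) * d := by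
  obtain ⟨w, hw, hw₀, hwi⟩ := exists_wtTrunc_eq_colDist hv hv₀ i
  obtain ⟨w', hw', hw'w, hw'wt⟩ := hφ.exists_wtTrunc_add_le hw i d
  have hw'₀ : (fun t => (w' t).coeff 0) ≠ 0 := by
    simpa only [hw'w] using hw₀
  exact (colDist_le_wtTrunc hw' hw'₀ _).trans (hwi ▸ hw'wt)

lemma colDist_le (hφ : IsInformationSet C φ) (a₀ : Fin k) (j : ℕ) :
    colDist C j ≤ (n - k) * (j + 1) + 1 := by
  obtain ⟨c, hc, hc₀⟩ := hφ.2 (Pi.single a₀ 1)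
  have hc₀ne : (fun t => (c t).coeff 0) ≠ 0 := fun h => by
    simpa [hc₀] using congrFun h (φ a₀)
  have hwt : wtTrunc 0 c ≤ n - k + 1 := by
    rw [wtTrunc_zero]
    exact card_filter_ne_zero_le_succ_of_injective hφ.1 a₀ fun a ha => by simp [hc₀, ha]
  have h₀ := colDist_le_wtTrunc hc hc₀ne 0
  have := hφ.colDist_add_le hc hc₀ne 0 j
  rw [zero_add] at this
  linarith

end IsInformationSet

end ColumnDistance

namespace IsEncoder

variable {F : Type*} [Field F] {n k : ℕ} {C : Submodule F[X] (Fin n → F[X])}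
  {G : Matrix (Fin k) (Fin n) F[X]}

lemma pos (hG : IsEncoder C G) (hC : C ≠ ⊥) : 0 < k := by
  refine Nat.pos_of_ne_zero fun hk => hC ?_
  subst hk
  rw [← hG.2, Set.range_eq_empty, Submodule.span_empty]

lemma exists_isInformationSet (hG : IsEncoder C G) (hdf : IsDelayFree G) :
    ∃ φ : Fin k → Fin n, IsInformationSet C φ := by
  obtain ⟨φ, hφ, hunit⟩ :=
    Matrix.exists_isUnit_submatrix_of_linearIndependent_row (A := Gcoeff G 0) hdf
  refine ⟨φ, hφ, fun w => ?_⟩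
  obtain ⟨u, hu⟩ := vecMul_surjective_iff_isUnit.2 hunit w
  refine ⟨∑ b, Polynomial.C (u b) • G b, ?_, fun a => ?_⟩
  · rw [← hG.2]
    exact Submodule.sum_mem _ fun b _ =>
      Submodule.smul_mem _ _ (Submodule.subset_span (Set.mem_range_self b))
  · rw [← hu]
    simp [vecMul, dotProduct, Gcoeff]

end IsEncoder

theorem stmt9_general {F : Type*} [Field F] {n k : ℕ}
    (C : Submodule (Polynomial F) (Fin n → Polynomial F))
    (G : Matrix (Fin k) (Fin n) (Polynomial F))
    (hG : IsEncoder C G) (hdf : IsDelayFree G)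
    (j : ℕ) (hj : colDist C j = (n - k) * (j + 1) + 1) :
    ∀ i ≤ j, colDist C i = (n - k) * (i + 1) + 1 := by
  intro i hij
  obtain ⟨d, rfl⟩ := Nat.exists_eq_add_of_le hij
  obtain ⟨φ, hφ⟩ := hG.exists_isInformationSet hdf
  obtain ⟨v, hv, hv₀⟩ := exists_mem_of_colDist_ne_zero (by omega : colDist C (i + d) ≠ 0)
  have hk : 0 < k := hG.pos ((Submodule.ne_bot_iff C).2 ⟨v, hv, by rintro rfl; exact hv₀ rfl⟩)
  have hsingleton := hφ.colDist_le ⟨0, hk⟩ i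
  have hgrowth := hφ.colDist_add_le hv hv₀ i d
  linarith

theorem stmt9 {F : Type*} [Field F] [Fintype F] {n k δ : ℕ} (hkn : k ≤ n)
    (C : Submodule (Polynomial F) (Fin n → Polynomial F))
    (G : Matrix (Fin k) (Fin n) (Polynomial F))
    (hG : IsEncoder C G) (hdf : IsDelayFree G) (hdeg : codeDegree G = δ)
    (j : ℕ) (hj : colDist C j = (n - k) * (j + 1) + 1) :
    ∀ i ≤ j, colDist C i = (n - k) * (i + 1) + 1 :=
  stmt9_general C G hG hdf j hj
end

section
/- Let G(z) = Σ_{i=0}^{ν} G_i z^i be an encoder of a delay-free (n,k) convolutional code C and let 𝒢_j be the j-th sliding encoder matrix of size (j+1)k × (j+1)n. Then d_j^c(C) = (n−k)(j+1)+1 if and only if every full-size ((j+1)k × (j+1)k) minor of 𝒢_j formed from columns with indices t_1 < ... < t_{(j+1)k} satisfying t_{sk+1} > sn for s = 1,...,j, is nonzero. -/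
open Polynomial Matrix

def slideMat {F : Type*} [Field F] {k n : ℕ} (Gc : ℕ → Matrix (Fin k) (Fin n) F)
    (j : ℕ) : Matrix (Fin ((j + 1) * k)) (Fin ((j + 1) * n)) F :=
  fun r c =>
    if h : (r : ℕ) / k ≤ (c : ℕ) / n ∧ (r : ℕ) % k < k ∧ (c : ℕ) % n < n then
      Gc ((c : ℕ) / n - (r : ℕ) / k) ⟨(r : ℕ) % k, h.2.1⟩ ⟨(c : ℕ) % n, h.2.2⟩
    else 0

/-!
Write the codeword of an input sequence `u` block by block, `v_c = ∑_{r ≤ c} u_r G_{c-r}`, so that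
`(u_0, …, u_j) 𝒢_j = (v_0, …, v_j)` and `d_j^c` is the least weight of `(v_0, …, v_j)` over inputs
with `u_0 ≠ 0`. Since `G_0` has full row rank it has an invertible `k × k` submatrix, so any input
can be continued such that every later block `v_c` vanishes on `k` fixed columns. This yields inputs
of weight at most `(n - k)(j + 1) + 1`, and it turns a singular admissible minor into an input of
weight at most `(n - k)(j + 1)`: start at the first nonzero block of a vector in its left kernel.
Conversely, let all admissible minors be nonzero and let an input be that light. Either a shorter
truncation is already light, which contradicts induction because every admissible minor of `𝒢_{j'}`
divides one of `𝒢_j` (block triangularity), or the `(j + 1) k` zeros of its codeword are spread out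
enough to index an admissible minor, which the input then annihilates.
-/

namespace ConvolutionalCode

open Finset

variable {F : Type*} [Field F] {k n : ℕ}

@[simp]
lemma divNat_finProdFinEquiv {m l : ℕ} (p : Fin m × Fin l) : (finProdFinEquiv p).divNat = p.1 :=
  congrArg Prod.fst (finProdFinEquiv.symm_apply_apply p)

@[simp]
lemma modNat_finProdFinEquiv {m l : ℕ} (p : Fin m × Fin l) : (finProdFinEquiv p).modNat = p.2 :=
  congrArg Prod.snd (finProdFinEquiv.symm_apply_apply p)

lemma vecMul_submatrix_id_apply {m l l' α : Type*} [Fintype m] [NonUnitalNonAssocSemiring α]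
    (x : m → α) (M : Matrix m l α) (φ : l' → l) (t : l') :
    (x ᵥ* M.submatrix id φ) t = (x ᵥ* M) (φ t) :=
  rfl

lemma hammingNorm_le_card_sub_of_eq_zero {ι β : Type*} [Fintype ι] [DecidableEq ι] [Zero β]
    [DecidableEq β] {x : ι → β} {S : Finset ι} (h : ∀ i ∈ S, x i = 0) :
    hammingNorm x ≤ Fintype.card ι - #S := by
  rw [← card_compl, hammingNorm]
  exact card_le_card fun i hi => mem_compl.2 fun hiS => (mem_filter.1 hi).2 (h i hiS)

lemma exists_injective_isUnit_det_submatrix (G₀ : Matrix (Fin k) (Fin n) F)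
    (hG₀ : LinearIndependent F G₀.row) :
    ∃ φJ : Fin k → Fin n, Function.Injective φJ ∧ IsUnit (G₀.submatrix id φJ).det := by
  obtain ⟨κ, a, ha, hspan, hli⟩ := exists_linearIndependent' F G₀.col
  have : Finite κ := Finite.of_injective a ha
  have : Fintype κ := Fintype.ofFinite κ
  have hcard : Fintype.card κ = k := by
    rw [← finrank_span_eq_card hli, hspan, ← rank_eq_finrank_span_cols, rank_eq_finrank_span_row,
      finrank_span_eq_card hG₀, Fintype.card_fin]
  let e : Fin k ≃ κ := (Fintype.equivFinOfCardEq hcard).symm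
  refine ⟨a ∘ e, ha.comp e.injective, ?_⟩
  rw [← isUnit_iff_isUnit_det, ← linearIndependent_cols_iff_isUnit]
  exact hli.comp e e.injective

def codewordBlock (Gc : ℕ → Matrix (Fin k) (Fin n) F) (u : ℕ → Fin k → F) (c : ℕ) :
    Fin n → F :=
  ∑ r ∈ range (c + 1), u r ᵥ* Gc (c - r)

lemma codewordBlock_congr {Gc : ℕ → Matrix (Fin k) (Fin n) F} {u u' : ℕ → Fin k → F} {c : ℕ}
    (h : ∀ r ≤ c, u r = u' r) : codewordBlock Gc u c = codewordBlock Gc u' c :=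
  sum_congr rfl fun r hr => by rw [h r (Nat.lt_succ_iff.1 (mem_range.1 hr))]

lemma codewordBlock_zero (Gc : ℕ → Matrix (Fin k) (Fin n) F) (u : ℕ → Fin k → F) :
    codewordBlock Gc u 0 = u 0 ᵥ* Gc 0 := by
  simp [codewordBlock]

lemma codewordBlock_eq_add (Gc : ℕ → Matrix (Fin k) (Fin n) F) (u : ℕ → Fin k → F) (c : ℕ) :
    codewordBlock Gc u c = ∑ r ∈ range c, u r ᵥ* Gc (c - r) + u c ᵥ* Gc 0 := by
  rw [codewordBlock, sum_range_succ, Nat.sub_self]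

lemma codewordBlock_shift (Gc : ℕ → Matrix (Fin k) (Fin n) F) {u : ℕ → Fin k → F} {s : ℕ}
    (h : ∀ b < s, u b = 0) (c : ℕ) :
    codewordBlock Gc (fun b => u (b + s)) c = codewordBlock Gc u (c + s) := by
  have hlow : ∑ r ∈ range s, u r ᵥ* Gc (c + s - r) = 0 :=
    sum_eq_zero fun r hr => by rw [h r (mem_range.1 hr), zero_vecMul]
  rw [codewordBlock, codewordBlock, show c + s + 1 = s + (c + 1) by ring, sum_range_add _ s, hlow,
    zero_add]
  refine sum_congr rfl fun r _ => ?_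
  rw [add_comm r s, add_comm s r, Nat.add_sub_add_right]

section Weight

variable [DecidableEq F]

def blockWeight (Gc : ℕ → Matrix (Fin k) (Fin n) F) (u : ℕ → Fin k → F) (m : ℕ) : ℕ :=
  ∑ c ∈ range m, hammingNorm (codewordBlock Gc u c)

def columnWeights (Gc : ℕ → Matrix (Fin k) (Fin n) F) (j : ℕ) : Set ℕ :=
  {w | ∃ u : ℕ → Fin k → F, u 0 ≠ 0 ∧ blockWeight Gc u (j + 1) = w}

lemma blockWeight_succ (Gc : ℕ → Matrix (Fin k) (Fin n) F) (u : ℕ → Fin k → F) (m : ℕ) :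
    blockWeight Gc u (m + 1) = blockWeight Gc u m + hammingNorm (codewordBlock Gc u m) :=
  sum_range_succ _ _

lemma blockWeight_congr {Gc : ℕ → Matrix (Fin k) (Fin n) F} {u u' : ℕ → Fin k → F} {m : ℕ}
    (h : ∀ r < m, u r = u' r) : blockWeight Gc u m = blockWeight Gc u' m :=
  sum_congr rfl fun _ hc =>
    congrArg hammingNorm (codewordBlock_congr fun r hr => h r ((mem_range.1 hc).trans_le' hr))

lemma blockWeight_pos {Gc : ℕ → Matrix (Fin k) (Fin n) F}
    (hG₀ : LinearIndependent F (Gc 0).row) {u : ℕ → Fin k → F} (hu : u 0 ≠ 0) {m : ℕ}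
    (hm : 0 < m) : 0 < blockWeight Gc u m := by
  have h₀ : codewordBlock Gc u 0 ≠ 0 := by
    rw [codewordBlock_zero]
    exact fun h => hu (vecMul_injective_iff.2 hG₀ (h.trans (zero_vecMul _).symm))
  exact (hammingNorm_pos_iff.2 h₀).trans_le
    (single_le_sum (f := fun c => hammingNorm (codewordBlock Gc u c)) (by simp) (mem_range.2 hm))

end Weight

def flatten (u : ℕ → Fin k → F) (j : ℕ) : Fin ((j + 1) * k) → F :=
  fun r => u r.divNat r.modNat

def unflatten (j : ℕ) (x : Fin ((j + 1) * k) → F) : ℕ → Fin k → F :=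
  fun b i => if h : b < j + 1 then x (finProdFinEquiv (⟨b, h⟩, i)) else 0

lemma flatten_ne_zero {u : ℕ → Fin k → F} (hu : u 0 ≠ 0) (j : ℕ) : flatten u j ≠ 0 := by
  obtain ⟨i, hi⟩ := Function.ne_iff.1 hu
  refine Function.ne_iff.2 ⟨finProdFinEquiv (0, i), ?_⟩
  simpa [flatten] using hi

lemma flatten_unflatten (j : ℕ) (x : Fin ((j + 1) * k) → F) : flatten (unflatten j x) j = x := by
  ext r
  rw [flatten, unflatten, dif_pos r.divNat.is_lt, Fin.eta, ← finProdFinEquiv_symm_apply,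
    Equiv.apply_symm_apply]

lemma unflatten_of_lt {j b : ℕ} (x : Fin ((j + 1) * k) → F) (h : j < b) :
    unflatten j x b = 0 := by
  ext i
  simp [unflatten, show ¬b < j + 1 by omega]

lemma slideMat_apply (Gc : ℕ → Matrix (Fin k) (Fin n) F) (j : ℕ) (r : Fin ((j + 1) * k))
    (c : Fin ((j + 1) * n)) :
    slideMat Gc j r c =
      if (r.divNat : ℕ) ≤ c.divNat then Gc (c.divNat - r.divNat) r.modNat c.modNat else 0 := by
  have hr : (r : ℕ) % k < k := r.modNat.is_lt
  have hc : (c : ℕ) % n < n := c.modNat.is_lt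
  unfold slideMat
  simp only [hr, hc, and_true, Fin.coe_divNat]
  split_ifs with h
  · simp only [h, if_true]; rfl
  · simp only [h, if_false]

lemma flatten_vecMul_slideMat (Gc : ℕ → Matrix (Fin k) (Fin n) F) (u : ℕ → Fin k → F)
    (j : ℕ) (c : Fin ((j + 1) * n)) :
    (flatten u j ᵥ* slideMat Gc j) c = codewordBlock Gc u c.divNat c.modNat := by
  have hc : (c.divNat : ℕ) < j + 1 := c.divNat.is_lt
  calc (flatten u j ᵥ* slideMat Gc j) c
      = ∑ a : Fin (j + 1), ∑ b : Fin k, u a b * slideMat Gc j (finProdFinEquiv (a, b)) c := by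
        rw [vecMul, dotProduct, ← finProdFinEquiv.sum_comp, Fintype.sum_prod_type]
        simp only [flatten, divNat_finProdFinEquiv, modNat_finProdFinEquiv]
    _ = ∑ a ∈ range (j + 1),
          if a ≤ c.divNat then (u a ᵥ* Gc (c.divNat - a)) c.modNat else 0 := by
        rw [← Fin.sum_univ_eq_sum_range]
        refine sum_congr rfl fun a _ => ?_
        simp only [slideMat_apply, divNat_finProdFinEquiv, modNat_finProdFinEquiv]
        split_ifs <;> simp [vecMul, dotProduct]
    _ = codewordBlock Gc u c.divNat c.modNat := by
        rw [← sum_filter, codewordBlock, Finset.sum_apply]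
        congr 1
        ext a
        simp only [mem_filter, mem_range]
        omega

section Counting

variable [DecidableEq F]

lemma card_filter_lt_vecMul_slideMat_ne_zero (Gc : ℕ → Matrix (Fin k) (Fin n) F)
    (u : ℕ → Fin k → F) {j s : ℕ} (hs : s ≤ j + 1) :
    #{c : Fin ((j + 1) * n) | (c : ℕ) < s * n ∧ (flatten u j ᵥ* slideMat Gc j) c ≠ 0} =
      blockWeight Gc u s := by
  have hlt : ∀ c : Fin ((j + 1) * n), (c : ℕ) < s * n ↔ (c.divNat : ℕ) < s := fun c => by
    have hn : 0 < n := Nat.pos_of_mul_pos_left c.pos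
    rw [Fin.coe_divNat, Nat.div_lt_iff_lt_mul hn]
  simp only [hlt, flatten_vecMul_slideMat, card_filter]
  rw [← finProdFinEquiv.sum_comp, Fintype.sum_prod_type]
  simp only [divNat_finProdFinEquiv, modNat_finProdFinEquiv]
  calc ∑ a : Fin (j + 1), ∑ b : Fin n,
        (if (a : ℕ) < s ∧ codewordBlock Gc u a b ≠ 0 then 1 else 0)
      = ∑ a ∈ range (j + 1), if a < s then hammingNorm (codewordBlock Gc u a) else 0 := by
        rw [← Fin.sum_univ_eq_sum_range]
        refine sum_congr rfl fun a _ => ?_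
        split_ifs with h <;> simp [h, hammingNorm, card_filter, ite_not]
    _ = blockWeight Gc u s := by
        rw [← sum_filter, blockWeight]
        congr 1
        ext a
        simp only [mem_filter, mem_range]
        omega

lemma hammingNorm_flatten_vecMul_slideMat (Gc : ℕ → Matrix (Fin k) (Fin n) F)
    (u : ℕ → Fin k → F) (j : ℕ) :
    hammingNorm (flatten u j ᵥ* slideMat Gc j) = blockWeight Gc u (j + 1) := by
  rw [← card_filter_lt_vecMul_slideMat_ne_zero Gc u le_rfl, hammingNorm]
  simp only [Fin.is_lt, true_and]

lemma card_filter_vecMul_slideMat_eq_zero_add_blockWeight (Gc : ℕ → Matrix (Fin k) (Fin n) F)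
    (u : ℕ → Fin k → F) {j s : ℕ} (hs : s ≤ j + 1) :
    #{c : Fin ((j + 1) * n) | (flatten u j ᵥ* slideMat Gc j) c = 0 ∧ (c : ℕ) < s * n} +
      blockWeight Gc u s = s * n := by
  rw [← card_filter_lt_vecMul_slideMat_ne_zero Gc u hs, ← filter_filter, filter_comm,
    ← filter_filter, card_filter_add_card_filter_not, Fin.card_filter_val_lt,
    min_eq_right (Nat.mul_le_mul_right n hs)]

end Counting

def IsAdmissible (j : ℕ) (φ : Fin ((j + 1) * k) → Fin ((j + 1) * n)) : Prop :=
  ∀ s, 1 ≤ s → s ≤ j → ∀ h : s * k < (j + 1) * k, s * n < (φ ⟨s * k, h⟩ : ℕ)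

def AdmissibleMinorsNeZero (Gc : ℕ → Matrix (Fin k) (Fin n) F) (j : ℕ) : Prop :=
  ∀ φ : Fin ((j + 1) * k) → Fin ((j + 1) * n), StrictMono φ → IsAdmissible j φ →
    ((slideMat Gc j).submatrix id φ).det ≠ 0

lemma IsAdmissible.mul_le_apply {j : ℕ} {φ : Fin ((j + 1) * k) → Fin ((j + 1) * n)}
    (hadm : IsAdmissible j φ) (hφ : StrictMono φ) {s : ℕ} (hs : s ≤ j) (t : Fin ((j + 1) * k))
    (ht : s * k ≤ t) : n * s ≤ φ t := by
  rcases Nat.eq_zero_or_pos s with rfl | hs₀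
  · simp
  · have hsk : s * k < (j + 1) * k := lt_of_le_of_lt ht t.is_lt
    have := hφ.monotone (show (⟨s * k, hsk⟩ : Fin _) ≤ t from ht)
    have := hadm s hs₀ hs hsk
    rw [Fin.le_def] at *
    rw [mul_comm]
    omega

lemma exists_admissible_of_card {j : ℕ} (Z : Finset (Fin ((j + 1) * n)))
    (hZ : (j + 1) * k ≤ #Z) (hlow : ∀ s, 1 ≤ s → s ≤ j → #{c ∈ Z | c.val < s * n} < s * k) :
    ∃ φ : Fin ((j + 1) * k) → Fin ((j + 1) * n),
      StrictMono φ ∧ IsAdmissible j φ ∧ ∀ t, φ t ∈ Z := by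
  obtain ⟨T, hTZ, hT⟩ := exists_subset_card_eq hZ
  let f := T.orderEmbOfFin hT
  refine ⟨f, f.strictMono, fun s hs₁ hsj hsk => ?_, fun t => hTZ (T.orderEmbOfFin_mem hT t)⟩
  by_contra! hle
  have hsk' : s * k ≤ (j + 1) * k := hsk.le
  refine (hlow s hs₁ hsj).not_ge ?_
  have hmaps : ∀ i ∈ (univ : Finset (Fin (s * k))),
      f (Fin.castLE hsk' i) ∈ {c ∈ Z | c.val < s * n} := by
    intro i _
    refine mem_filter.2 ⟨hTZ (T.orderEmbOfFin_mem hT _), lt_of_lt_of_le ?_ hle⟩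
    exact f.strictMono (show Fin.castLE hsk' i < ⟨s * k, hsk⟩ from i.is_lt)
  simpa using card_le_card_of_injOn _ hmaps (f.injective.comp (Fin.castLE_injective hsk')).injOn

section Restriction

variable {j' j : ℕ}

lemma slideMat_castLE (Gc : ℕ → Matrix (Fin k) (Fin n) F) (hk : (j' + 1) * k ≤ (j + 1) * k)
    (hn : (j' + 1) * n ≤ (j + 1) * n) (r : Fin ((j' + 1) * k)) (c : Fin ((j' + 1) * n)) :
    slideMat Gc j (Fin.castLE hk r) (Fin.castLE hn c) = slideMat Gc j' r c :=
  rfl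

/-- Block `b > j'` receives the columns `n b + 1, …, n b + k`; avoiding column `n b` keeps the
admissibility inequalities strict. -/
def extendCols (hkn : k < n) (hj : j' ≤ j) (φ : Fin ((j' + 1) * k) → Fin ((j' + 1) * n)) :
    Fin ((j + 1) * k) → Fin ((j + 1) * n) :=
  fun t => if h : (t : ℕ) < (j' + 1) * k then Fin.castLE (by gcongr) (φ ⟨t, h⟩)
    else ⟨n * t.divNat + t.modNat + 1, calc
      n * t.divNat + t.modNat + 1 < n * t.divNat + n := by have := t.modNat.is_lt; omega
      _ = n * (t.divNat + 1) := by ring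
      _ ≤ n * (j + 1) := Nat.mul_le_mul_left n t.divNat.is_lt
      _ = (j + 1) * n := mul_comm _ _⟩

lemma extendCols_castLE (hkn : k < n) (hj : j' ≤ j)
    (φ : Fin ((j' + 1) * k) → Fin ((j' + 1) * n)) (t : Fin ((j' + 1) * k)) :
    extendCols hkn hj φ (Fin.castLE (by gcongr) t) = Fin.castLE (by gcongr) (φ t) := by
  simp [extendCols]

lemma extendCols_of_le (hkn : k < n) (hj : j' ≤ j)
    (φ : Fin ((j' + 1) * k) → Fin ((j' + 1) * n)) {t : Fin ((j + 1) * k)} (ht : (j' + 1) * k ≤ t) :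
    (extendCols hkn hj φ t : ℕ) = n * (t / k) + t % k + 1 := by
  simp [extendCols, not_lt.2 ht]

lemma mul_div_add_mod_lt_mul_div_add_mod (hkn : k < n) {a b : ℕ} (h : a < b) :
    n * (a / k) + a % k < n * (b / k) + b % k := by
  rcases (Nat.div_le_div_right (c := k) h.le).lt_or_eq with hlt | heq
  · have hk : k ≠ 0 := by rintro rfl; simp at hlt
    have h₁ := Nat.mul_le_mul_left n (show a / k + 1 ≤ b / k from hlt)
    have := Nat.mod_lt a (Nat.pos_of_ne_zero hk)
    rw [mul_add, mul_one] at h₁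
    omega
  · have := Nat.div_add_mod a k
    have := Nat.div_add_mod b k
    rw [heq] at *
    omega

lemma strictMono_extendCols (hkn : k < n) (hj : j' ≤ j)
    {φ : Fin ((j' + 1) * k) → Fin ((j' + 1) * n)} (hφ : StrictMono φ) :
    StrictMono (extendCols hkn hj φ) := by
  intro a b hab
  rw [Fin.lt_def] at hab ⊢
  by_cases hb : (b : ℕ) < (j' + 1) * k
  · have ha : (a : ℕ) < (j' + 1) * k := hab.trans hb
    simpa [extendCols, ha, hb] using hφ (show (⟨a, ha⟩ : Fin _) < ⟨b, hb⟩ from hab)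
  rw [extendCols_of_le hkn hj φ (not_lt.1 hb)]
  by_cases ha : (a : ℕ) < (j' + 1) * k
  · have hφa : (extendCols hkn hj φ a : ℕ) < (j' + 1) * n := by simp [extendCols, ha]
    have hk : 0 < k := Nat.pos_of_mul_pos_left (Nat.zero_lt_of_lt ha)
    have := Nat.mul_le_mul_left n ((Nat.le_div_iff_mul_le hk).2 (not_lt.1 hb))
    rw [mul_comm n] at this
    omega
  · rw [extendCols_of_le hkn hj φ (not_lt.1 ha)]
    have := mul_div_add_mod_lt_mul_div_add_mod hkn hab
    omega

lemma isAdmissible_extendCols (hkn : k < n) (hj : j' ≤ j)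
    {φ : Fin ((j' + 1) * k) → Fin ((j' + 1) * n)} (hφ : IsAdmissible j' φ) :
    IsAdmissible j (extendCols hkn hj φ) := by
  intro s hs₁ hsj hsk
  have hk : 0 < k := Nat.pos_of_mul_pos_left (Nat.zero_lt_of_lt hsk)
  by_cases hs : s ≤ j'
  · have hsk' : s * k < (j' + 1) * k := Nat.mul_lt_mul_of_pos_right (by omega) hk
    simpa [extendCols, hsk'] using hφ s hs₁ hs hsk'
  · have hsk' : (j' + 1) * k ≤ s * k := Nat.mul_le_mul_right k (by omega)
    rw [extendCols_of_le hkn hj φ hsk', Nat.mul_div_cancel _ hk, Nat.mul_mod_left, mul_comm]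
    omega

lemma det_submatrix_dvd_det_submatrix_extendCols (Gc : ℕ → Matrix (Fin k) (Fin n) F)
    (hkn : k < n) (hj : j' ≤ j) (φ : Fin ((j' + 1) * k) → Fin ((j' + 1) * n)) :
    ((slideMat Gc j').submatrix id φ).det ∣
      ((slideMat Gc j).submatrix id (extendCols hkn hj φ)).det := by
  set M := (slideMat Gc j).submatrix id (extendCols hkn hj φ)
  have hK : (j' + 1) * k ≤ (j + 1) * k := by gcongr
  have hzero : ∀ r : Fin ((j + 1) * k), ¬(r : ℕ) < (j' + 1) * k →
      ∀ t : Fin ((j + 1) * k), (t : ℕ) < (j' + 1) * k → M r t = 0 := by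
    intro r hr t ht
    have hk : 0 < k := Nat.pos_of_mul_pos_left (Nat.zero_lt_of_lt ht)
    have hn : 0 < n := hk.trans hkn
    have hext : (extendCols hkn hj φ t : ℕ) < (j' + 1) * n := by simp [extendCols, ht]
    change slideMat Gc j r (extendCols hkn hj φ t) = 0
    rw [slideMat_apply, if_neg]
    rw [Fin.coe_divNat, Fin.coe_divNat, not_le, Nat.div_lt_iff_lt_mul hn]
    exact hext.trans_le (Nat.mul_le_mul_right n ((Nat.le_div_iff_mul_le hk).2 (not_lt.1 hr)))
  have htop : (M.toSquareBlockProp fun t => (t : ℕ) < (j' + 1) * k).det =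
      ((slideMat Gc j').submatrix id φ).det := by
    rw [← det_submatrix_equiv_self (Fin.castLEquiv hK)]
    congr 1
    ext r c
    change slideMat Gc j (Fin.castLE hK r) (extendCols hkn hj φ (Fin.castLE hK c)) = _
    rw [extendCols_castLE]
    exact slideMat_castLE Gc hK _ r (φ c)
  rw [twoBlockTriangular_det M _ hzero, htop]
  exact dvd_mul_right _ _

lemma AdmissibleMinorsNeZero.mono {Gc : ℕ → Matrix (Fin k) (Fin n) F} (hkn : k < n)
    (h : AdmissibleMinorsNeZero Gc j) (hj : j' ≤ j) : AdmissibleMinorsNeZero Gc j' :=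
  fun φ hφ hadm hdet => h _ (strictMono_extendCols hkn hj hφ) (isAdmissible_extendCols hkn hj hadm)
    (zero_dvd_iff.1 (hdet ▸ det_submatrix_dvd_det_submatrix_extendCols Gc hkn hj φ))

end Restriction

section Extension

variable {Gc : ℕ → Matrix (Fin k) (Fin n) F} {φJ : Fin k → Fin n}

lemma exists_update_codewordBlock_eq_zero (hA : IsUnit ((Gc 0).submatrix id φJ).det)
    (u : ℕ → Fin k → F) (c : ℕ) :
    ∃ a, ∀ i, codewordBlock Gc (Function.update u c a) c (φJ i) = 0 := by
  set S := ∑ r ∈ range c, u r ᵥ* Gc (c - r)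
  set A := (Gc 0).submatrix id φJ
  set a := (-(S ∘ φJ)) ᵥ* A⁻¹
  have hS : ∑ r ∈ range c, Function.update u c a r ᵥ* Gc (c - r) = S :=
    sum_congr rfl fun r hr => by rw [Function.update_of_ne (mem_range.1 hr).ne]
  have ha : a ᵥ* A = -(S ∘ φJ) := by rw [vecMul_vecMul, nonsing_inv_mul _ hA, vecMul_one]
  refine ⟨a, fun i => ?_⟩
  rw [codewordBlock_eq_add, hS, Function.update_self, Pi.add_apply, add_comm]
  exact eq_neg_iff_add_eq_zero.1 (congrFun ha i)

variable [DecidableEq F]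

lemma hammingNorm_le_sub_of_comp_eq_zero (hφJ : Function.Injective φJ) {v : Fin n → F}
    {s : Finset (Fin k)} (h : ∀ i ∈ s, v (φJ i) = 0) : hammingNorm v ≤ n - #s := by
  simpa using hammingNorm_le_card_sub_of_eq_zero (S := s.map ⟨φJ, hφJ⟩) (by simpa using h)

lemma exists_extension (hφJ : Function.Injective φJ) (hA : IsUnit ((Gc 0).submatrix id φJ).det)
    (u : ℕ → Fin k → F) (m d : ℕ) :
    ∃ u', (∀ r < m, u' r = u r) ∧ blockWeight Gc u' (m + d) ≤ blockWeight Gc u m + d * (n - k) := by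
  induction d with
  | zero => exact ⟨u, fun _ _ => rfl, by simp⟩
  | succ d ih =>
    obtain ⟨u', hu', hw⟩ := ih
    obtain ⟨a, ha⟩ := exists_update_codewordBlock_eq_zero hA u' (m + d)
    refine ⟨Function.update u' (m + d) a, fun r hr => ?_, ?_⟩
    · rw [Function.update_of_ne (by omega), hu' r hr]
    · have hprefix : blockWeight Gc (Function.update u' (m + d) a) (m + d) =
          blockWeight Gc u' (m + d) :=
        blockWeight_congr fun r hr => Function.update_of_ne hr.ne _ _
      have hlast := hammingNorm_le_sub_of_comp_eq_zero hφJ (s := univ) fun i _ => ha i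
      rw [card_univ, Fintype.card_fin] at hlast
      rw [← add_assoc, blockWeight_succ, hprefix, Nat.succ_mul]
      omega

lemma exists_blockWeight_le_singleton (hk : 0 < k) (hG₀ : LinearIndependent F (Gc 0).row)
    (j : ℕ) : ∃ u, u 0 ≠ 0 ∧ blockWeight Gc u (j + 1) ≤ (n - k) * (j + 1) + 1 := by
  obtain ⟨φJ, hφJ, hA⟩ := exists_injective_isUnit_det_submatrix (Gc 0) hG₀
  let z : Fin k := ⟨0, hk⟩
  let u₀ : Fin k → F := Pi.single z 1 ᵥ* ((Gc 0).submatrix id φJ)⁻¹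
  have hu₀ : u₀ ᵥ* (Gc 0).submatrix id φJ = Pi.single z 1 := by
    rw [vecMul_vecMul, nonsing_inv_mul _ hA, vecMul_one]
  obtain ⟨u, hu, hw⟩ := exists_extension hφJ hA (fun _ => u₀) 1 j
  refine ⟨u, fun h => ?_, ?_⟩
  · rw [hu 0 one_pos] at h
    simpa [h] using congrFun hu₀ z
  · have h₀ : hammingNorm (codewordBlock Gc (fun _ => u₀) 0) ≤ n - #(univ.erase z) :=
      hammingNorm_le_sub_of_comp_eq_zero hφJ fun i hi => by
        rw [codewordBlock_zero]
        exact (congrFun hu₀ i).trans (Pi.single_eq_of_ne (ne_of_mem_erase hi) _)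
    rw [card_erase_of_mem (mem_univ z), card_univ, Fintype.card_fin] at h₀
    have h₁ : blockWeight Gc (fun _ => u₀) 1 = hammingNorm (codewordBlock Gc (fun _ => u₀) 0) := by
      simp [blockWeight]
    rw [h₁, add_comm 1 j] at hw
    have : (n - k) * (j + 1) = j * (n - k) + (n - k) := by ring
    omega

end Extension

lemma blockWeight_shift_le_of_vecMul_eq_zero [DecidableEq F]
    {Gc : ℕ → Matrix (Fin k) (Fin n) F} {j : ℕ} {φ : Fin ((j + 1) * k) → Fin ((j + 1) * n)}
    (hφ : StrictMono φ) (hadm : IsAdmissible j φ) {x : Fin ((j + 1) * k) → F}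
    (hx : x ᵥ* (slideMat Gc j).submatrix id φ = 0) {s : ℕ} (hs : s ≤ j)
    (hlow : ∀ b < s, unflatten j x b = 0) :
    blockWeight Gc (fun b => unflatten j x (b + s)) (j - s + 1) ≤ (n - k) * (j - s + 1) := by
  obtain ⟨j', rfl⟩ : ∃ j', j = j' + s := ⟨j - s, by omega⟩
  rw [Nat.add_sub_cancel]
  have hK : (j' + 1) * k + s * k = (j' + s + 1) * k := by ring
  let shift : Fin ((j' + 1) * k) → Fin ((j' + s + 1) * k) := fun t => ⟨t + s * k, by omega⟩
  have hφ_ge : ∀ t, n * s ≤ φ (shift t) := fun t =>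
    hadm.mul_le_apply hφ (by omega) _ (by simp [shift])
  -- Admissibility puts the columns `φ t`, `t ≥ s k`, into blocks `≥ s`; shifted back by `s`
  -- blocks they are zeros of the codeword of the shifted input.
  let ψ : Fin ((j' + 1) * k) → Fin ((j' + 1) * n) := fun t =>
    ⟨φ (shift t) - n * s,
      Nat.sub_lt_left_of_lt_add (hφ_ge t) ((φ (shift t)).is_lt.trans_eq (by ring))⟩
  have hψ : ∀ t, (ψ t : ℕ) + n * s = φ (shift t) := fun t => Nat.sub_add_cancel (hφ_ge t)
  have hψinj : Function.Injective ψ := fun t t' h => by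
    have hφ' : φ (shift t) = φ (shift t') := Fin.ext (by rw [← hψ t, ← hψ t', h])
    simpa [shift, Fin.ext_iff] using hφ.injective hφ'
  have hzero : ∀ t,
      (flatten (fun b => unflatten (j' + s) x (b + s)) j' ᵥ* slideMat Gc j') (ψ t) = 0 := by
    intro t
    have hn : 0 < n := Nat.pos_of_mul_pos_left (ψ t).pos
    have h := congrFun hx (shift t)
    rw [← flatten_unflatten (j' + s) x] at h
    rw [vecMul_submatrix_id_apply, flatten_vecMul_slideMat] at h
    have hdiv : ((ψ t).divNat : ℕ) + s = (φ (shift t)).divNat := by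
      rw [Fin.coe_divNat, Fin.coe_divNat, ← hψ t, Nat.add_mul_div_left _ _ hn]
    have hmod : (ψ t).modNat = (φ (shift t)).modNat :=
      Fin.ext (by rw [Fin.coe_modNat, Fin.coe_modNat, ← hψ t, Nat.add_mul_mod_self_left])
    rw [flatten_vecMul_slideMat, codewordBlock_shift Gc hlow, hdiv, hmod]
    exact h
  have hS := hammingNorm_le_card_sub_of_eq_zero (S := univ.map ⟨ψ, hψinj⟩) (by simpa using hzero)
  rw [card_map, card_univ, Fintype.card_fin, Fintype.card_fin, ← Nat.mul_sub,
    hammingNorm_flatten_vecMul_slideMat] at hS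
  rwa [mul_comm]

lemma exists_blockWeight_le_of_det_eq_zero [DecidableEq F] {Gc : ℕ → Matrix (Fin k) (Fin n) F}
    (hG₀ : LinearIndependent F (Gc 0).row) {j : ℕ} {φ : Fin ((j + 1) * k) → Fin ((j + 1) * n)}
    (hφ : StrictMono φ) (hadm : IsAdmissible j φ)
    (hdet : ((slideMat Gc j).submatrix id φ).det = 0) :
    ∃ u, u 0 ≠ 0 ∧ blockWeight Gc u (j + 1) ≤ (n - k) * (j + 1) := by
  obtain ⟨x, hx0, hx⟩ := exists_vecMul_eq_zero_iff.2 hdet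
  have hsupp : ∃ b, unflatten j x b ≠ 0 := by
    by_contra! h
    exact hx0 (by rw [← flatten_unflatten j x]; ext r; simp [flatten, h])
  set s := Nat.find hsupp
  have hs : s ≤ j := by
    by_contra! h
    exact Nat.find_spec hsupp (unflatten_of_lt x h)
  have hlow : ∀ b < s, unflatten j x b = 0 := fun b hb => not_not.1 (Nat.find_min hsupp hb)
  obtain ⟨φJ, hφJ, hA⟩ := exists_injective_isUnit_det_submatrix (Gc 0) hG₀
  obtain ⟨u, hu, hw⟩ := exists_extension hφJ hA (fun b => unflatten j x (b + s)) (j - s + 1) s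
  refine ⟨u, ?_, ?_⟩
  · rw [hu 0 (Nat.succ_pos _), zero_add]
    exact Nat.find_spec hsupp
  · have hshift := blockWeight_shift_le_of_vecMul_eq_zero hφ hadm hx hs hlow
    have hsum : (n - k) * (j - s + 1) + s * (n - k) = (n - k) * (j + 1) := by
      rw [mul_comm s, ← mul_add]
      congr 1
      omega
    rw [show j - s + 1 + s = j + 1 by omega] at hw
    omega

lemma exists_admissible_vecMul_eq_zero [DecidableEq F] {Gc : ℕ → Matrix (Fin k) (Fin n) F}
    (hkn : k ≤ n) {u : ℕ → Fin k → F} {j : ℕ}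
    (hw : blockWeight Gc u (j + 1) ≤ (n - k) * (j + 1))
    (hprefix : ∀ s, 1 ≤ s → s ≤ j → (n - k) * s < blockWeight Gc u s) :
    ∃ φ : Fin ((j + 1) * k) → Fin ((j + 1) * n), StrictMono φ ∧ IsAdmissible j φ ∧
      flatten u j ᵥ* (slideMat Gc j).submatrix id φ = 0 := by
  set w := flatten u j ᵥ* slideMat Gc j
  have hcount : ∀ s ≤ j + 1, #{c | w c = 0 ∧ (c : ℕ) < s * n} + blockWeight Gc u s = s * n :=
    fun s hs => card_filter_vecMul_slideMat_eq_zero_add_blockWeight Gc u hs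
  have hsplit : ∀ s, s * n = s * k + (n - k) * s := fun s => by
    rw [mul_comm (n - k), ← mul_add, Nat.add_sub_cancel' hkn]
  have hZ : (j + 1) * k ≤ #{c | w c = 0} := by
    have := hcount (j + 1) le_rfl
    simp only [Fin.is_lt, and_true] at this
    have := hsplit (j + 1)
    omega
  have hlow : ∀ s, 1 ≤ s → s ≤ j → #{c ∈ {c | w c = 0} | c.val < s * n} < s * k := by
    intro s hs₁ hsj
    have := hcount s (by omega)
    have := hprefix s hs₁ hsj
    have := hsplit s
    rw [filter_filter]
    omega
  obtain ⟨φ, hφ, hadm, hφZ⟩ := exists_admissible_of_card _ hZ hlow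
  exact ⟨φ, hφ, hadm, funext fun t => (mem_filter.1 (hφZ t)).2⟩

theorem lt_blockWeight_of_admissibleMinorsNeZero [DecidableEq F]
    {Gc : ℕ → Matrix (Fin k) (Fin n) F} (hkn : k ≤ n) (hG₀ : LinearIndependent F (Gc 0).row)
    {j : ℕ} (hmin : AdmissibleMinorsNeZero Gc j) {u : ℕ → Fin k → F} (hu : u 0 ≠ 0) :
    (n - k) * (j + 1) < blockWeight Gc u (j + 1) := by
  induction j using Nat.strong_induction_on with
  | _ j ih =>
  rcases hkn.lt_or_eq with hkn | rfl
  swap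
  · simpa using blockWeight_pos hG₀ hu j.succ_pos
  by_contra! hw
  by_cases hprefix : ∃ s, 1 ≤ s ∧ s ≤ j ∧ blockWeight Gc u s ≤ (n - k) * s
  · obtain ⟨s, hs₁, hsj, hs⟩ := hprefix
    have := ih (s - 1) (by omega) (hmin.mono hkn (by omega))
    rw [Nat.sub_add_cancel hs₁] at this
    omega
  simp only [not_exists, not_and, not_le] at hprefix
  obtain ⟨φ, hφ, hadm, hker⟩ := exists_admissible_vecMul_eq_zero hkn.le hw hprefix
  exact hmin φ hφ hadm (exists_vecMul_eq_zero_iff.1 ⟨flatten u j, flatten_ne_zero hu j, hker⟩)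

theorem sInf_columnWeights_eq_iff [DecidableEq F] {Gc : ℕ → Matrix (Fin k) (Fin n) F}
    (hk : 0 < k) (hkn : k ≤ n) (hG₀ : LinearIndependent F (Gc 0).row) (j : ℕ) :
    sInf (columnWeights Gc j) = (n - k) * (j + 1) + 1 ↔ AdmissibleMinorsNeZero Gc j := by
  have hmem : ∀ u : ℕ → Fin k → F, u 0 ≠ 0 → blockWeight Gc u (j + 1) ∈ columnWeights Gc j :=
    fun u hu => ⟨u, hu, rfl⟩
  obtain ⟨u, hu, hw⟩ := exists_blockWeight_le_singleton hk hG₀ j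
  constructor
  · intro h φ hφ hadm hdet
    obtain ⟨u', hu', hw'⟩ := exists_blockWeight_le_of_det_eq_zero hG₀ hφ hadm hdet
    have := Nat.sInf_le (hmem u' hu')
    omega
  · intro hmin
    refine le_antisymm ((Nat.sInf_le (hmem u hu)).trans hw) (le_csInf ⟨_, hmem u hu⟩ ?_)
    rintro _ ⟨u', hu', rfl⟩
    exact lt_blockWeight_of_admissibleMinorsNeZero hkn hG₀ hmin hu'

lemma coeff_sum_mul_eq_codewordBlock (G : Matrix (Fin k) (Fin n) F[X]) (p : Fin k → F[X])
    (c : ℕ) (t : Fin n) :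
    (∑ i, p i * G i t).coeff c = codewordBlock (Gcoeff G) (fun b i => (p i).coeff b) c t := by
  simp only [finsetSum_coeff, coeff_mul, Nat.sum_antidiagonal_eq_sum_range_succ_mk,
    codewordBlock, Finset.sum_apply, vecMul, dotProduct, Gcoeff]
  exact sum_comm

lemma mem_iff_exists_sum_mul {C : Submodule F[X] (Fin n → F[X])}
    {G : Matrix (Fin k) (Fin n) F[X]}
    (hspan : Submodule.span F[X] (Set.range fun i : Fin k => fun t => G i t) = C)
    (v : Fin n → F[X]) : v ∈ C ↔ ∃ p : Fin k → F[X], ∀ t, v t = ∑ i, p i * G i t := by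
  simp only [← hspan, Submodule.mem_span_range_iff_exists_fun, funext_iff, Finset.sum_apply,
    Pi.smul_apply, smul_eq_mul, eq_comm (b := v _)]

section Polynomial

variable [DecidableEq F] {C : Submodule F[X] (Fin n → F[X])} {G : Matrix (Fin k) (Fin n) F[X]}

lemma wtTrunc_eq_blockWeight (Gc : ℕ → Matrix (Fin k) (Fin n) F) {j : ℕ}
    {v : Fin n → F[X]} {u : ℕ → Fin k → F}
    (h : ∀ c ≤ j, ∀ t, (v t).coeff c = codewordBlock Gc u c t) :
    wtTrunc j v = blockWeight Gc u (j + 1) := by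
  have hset : {p : ℕ × Fin n | p.1 ≤ j ∧ (v p.2).coeff p.1 ≠ 0} =
      ↑{p ∈ range (j + 1) ×ˢ (univ : Finset (Fin n)) | codewordBlock Gc u p.1 p.2 ≠ 0} := by
    ext ⟨c, t⟩
    simp only [Set.mem_ofPred_eq, coe_filter, mem_product, mem_range, mem_univ, and_true,
      Nat.lt_succ_iff]
    exact and_congr_right fun hc => by rw [h c hc t]
  rw [wtTrunc, hset, Set.ncard_coe_finset, card_filter, sum_product, blockWeight]
  simp only [hammingNorm, card_filter]

lemma wtTrunc_mem_columnWeights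
    (hspan : Submodule.span F[X] (Set.range fun i : Fin k => fun t => G i t) = C) (j : ℕ)
    {v : Fin n → F[X]} (hv : v ∈ C) (hv₀ : (fun t => (v t).coeff 0) ≠ 0) :
    wtTrunc j v ∈ columnWeights (Gcoeff G) j := by
  obtain ⟨p, hp⟩ := (mem_iff_exists_sum_mul hspan v).1 hv
  have hcoeff : ∀ c t,
      (v t).coeff c = codewordBlock (Gcoeff G) (fun b i => (p i).coeff b) c t :=
    fun c t => by rw [hp, coeff_sum_mul_eq_codewordBlock]
  refine ⟨_, fun h => hv₀ (funext fun t => ?_),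
    (wtTrunc_eq_blockWeight _ fun c _ => hcoeff c).symm⟩
  rw [hcoeff, codewordBlock_zero, h, zero_vecMul, Pi.zero_apply]

lemma exists_mem_wtTrunc_eq
    (hspan : Submodule.span F[X] (Set.range fun i : Fin k => fun t => G i t) = C)
    (hG₀ : LinearIndependent F (Gcoeff G 0).row) (j : ℕ) {u : ℕ → Fin k → F} (hu : u 0 ≠ 0) :
    ∃ v ∈ C, (fun t => (v t).coeff 0) ≠ 0 ∧ wtTrunc j v = blockWeight (Gcoeff G) u (j + 1) := by
  let p : Fin k → F[X] := fun i => ∑ b ∈ range (j + 1), monomial b (u b i)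
  have hp : ∀ b ≤ j, (fun i => (p i).coeff b) = u b := fun b hb => by
    ext i
    simp [p, finsetSum_coeff, coeff_monomial, hb]
  let v : Fin n → F[X] := fun t => ∑ i, p i * G i t
  have hcoeff : ∀ c ≤ j, ∀ t, (v t).coeff c = codewordBlock (Gcoeff G) u c t := fun c hc t => by
    rw [coeff_sum_mul_eq_codewordBlock]
    exact congrFun (codewordBlock_congr fun b hb => hp b (hb.trans hc)) t
  refine ⟨v, (mem_iff_exists_sum_mul hspan v).2 ⟨p, fun _ => rfl⟩,
    fun h => hu (vecMul_injective_iff.2 hG₀ ?_), wtTrunc_eq_blockWeight _ hcoeff⟩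
  ext t
  change (u 0 ᵥ* Gcoeff G 0) t = (0 ᵥ* Gcoeff G 0) t
  rw [zero_vecMul, ← codewordBlock_zero, ← hcoeff 0 (Nat.zero_le j) t]
  exact congrFun h t

theorem colDist_eq_sInf_columnWeights
    (hspan : Submodule.span F[X] (Set.range fun i : Fin k => fun t => G i t) = C)
    (hG₀ : LinearIndependent F (Gcoeff G 0).row) (j : ℕ) :
    colDist C j = sInf (columnWeights (Gcoeff G) j) := by
  rw [colDist]
  congr 1
  ext w
  constructor
  · rintro ⟨v, hv, hv₀, rfl⟩
    exact wtTrunc_mem_columnWeights hspan j hv hv₀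
  · rintro ⟨u, hu, rfl⟩
    obtain ⟨v, hv, hv₀, hw⟩ := exists_mem_wtTrunc_eq hspan hG₀ j hu
    exact ⟨v, hv, hv₀, hw.symm⟩

end Polynomial

end ConvolutionalCode

theorem stmt10_general {F : Type*} [Field F] {n k : ℕ} (hk : 0 < k)
    (hkn : k ≤ n)
    (C : Submodule (Polynomial F) (Fin n → Polynomial F))
    (G : Matrix (Fin k) (Fin n) (Polynomial F))
    (hG : IsEncoder C G) (hdf : IsDelayFree G) (j : ℕ) :
    colDist C j = (n - k) * (j + 1) + 1 ↔
      ∀ φ : Fin ((j + 1) * k) → Fin ((j + 1) * n), StrictMono φ →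
        (∀ (s : ℕ), 1 ≤ s → s ≤ j → ∀ h : s * k < (j + 1) * k,
          s * n < ((φ ⟨s * k, h⟩ : Fin ((j + 1) * n)) : ℕ)) →
        ((slideMat (Gcoeff G) j).submatrix id φ).det ≠ 0 := by
  classical
  rw [ConvolutionalCode.colDist_eq_sInf_columnWeights hG.2 hdf j]
  exact ConvolutionalCode.sInf_columnWeights_eq_iff (Gc := Gcoeff G) hk hkn hdf j

theorem stmt10 {F : Type*} [Field F] [Fintype F] {n k ν : ℕ} (hk : 0 < k) (hn : 0 < n)
    (hkn : k ≤ n)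
    (C : Submodule (Polynomial F) (Fin n → Polynomial F))
    (G : Matrix (Fin k) (Fin n) (Polynomial F))
    (hG : IsEncoder C G) (hdf : IsDelayFree G)
    (hsupp : ∀ i : ℕ, ν < i → Gcoeff G i = 0) (j : ℕ) :
    colDist C j = (n - k) * (j + 1) + 1 ↔
      ∀ φ : Fin ((j + 1) * k) → Fin ((j + 1) * n), StrictMono φ →
        (∀ (s : ℕ), 1 ≤ s → s ≤ j → ∀ h : s * k < (j + 1) * k,
          s * n < ((φ ⟨s * k, h⟩ : Fin ((j + 1) * n)) : ℕ)) →
        ((slideMat (Gcoeff G) j).submatrix id φ).det ≠ 0 :=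
  stmt10_general hk hkn C G hG hdf j
end

section
/- Let G(z) = Σ_{i=0}^{ν} G_i z^i be an encoder of an MDP (n,k,δ−k) convolutional code with δ = (ν+1)k, and let Ḡ(z) = G(z) + G_ℓ z^{ν+1} with ℓ ∈ {0,...,ν} be an encoder of the (n,k,δ) code C̄. If n > (ν+1)k, then C̄ is not MDP; indeed d_{ν+1}^c(C̄) ≤ n(ν+1) − k + 1 < (n−k)(ν+2) + 1. -/
open Polynomial Matrix

theorem stmt14 {F : Type*} [Field F] [Fintype F] {n k δ ν ℓ : ℕ} (hk : 0 < k)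
    (hδ : δ = (ν + 1) * k) (hn : (ν + 1) * k < n) (hℓ : ℓ ≤ ν)
    (C : Submodule (Polynomial F) (Fin n → Polynomial F))
    (G : Matrix (Fin k) (Fin n) (Polynomial F))
    (hG : IsEncoder C G) (hdeg : codeDegree G = δ - k)
    (hsupp : ∀ i : ℕ, ν < i → Gcoeff G i = 0)
    (hMDP : ∀ j ≤ (δ - k) / k + (δ - k) / (n - k),
      colDist C j = (n - k) * (j + 1) + 1) :
    colDist (Submodule.span (Polynomial F)
        (Set.range fun i : Fin k => fun t : Fin n =>
          G i t + Polynomial.C ((G i t).coeff ℓ) * Polynomial.X ^ (ν + 1))) (ν + 1)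
        ≤ n * (ν + 1) - k + 1 ∧
    n * (ν + 1) - k + 1 < (n - k) * (ν + 2) + 1 ∧
    ¬ (∀ j ≤ δ / k + δ / (n - k),
        colDist (Submodule.span (Polynomial F)
          (Set.range fun i : Fin k => fun t : Fin n =>
            G i t + Polynomial.C ((G i t).coeff ℓ) * Polynomial.X ^ (ν + 1))) j
          = (n - k) * (j + 1) + 1) := by
  classical
  -- abbreviations
  set Gbar : Fin k → (Fin n → Polynomial F) := fun i : Fin k => fun t : Fin n =>
    G i t + Polynomial.C ((G i t).coeff ℓ) * Polynomial.X ^ (ν + 1) with hGbar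
  set Cbar := Submodule.span (Polynomial F) (Set.range Gbar) with hCbar
  have hm1 : 1 ≤ ν + 1 - ℓ := by omega
  have hkk : k ≤ (ν + 1) * k := Nat.le_mul_of_pos_left k (by omega)
  have hkn : k < n := lt_of_le_of_lt hkk hn
  -- step A : get minimal weight witness at level 0
  have h0 : colDist C 0 = (n - k) * 1 + 1 := hMDP 0 (Nat.zero_le _)
  unfold colDist at h0
  have hS0 : {w | ∃ v ∈ C, (fun t => (v t).coeff 0) ≠ (0 : Fin n → F) ∧ w = wtTrunc 0 v}.Nonempty := by
    by_contra hne
    rw [Set.not_nonempty_iff_eq_empty] at hne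
    rw [hne, Nat.sInf_empty] at h0
    omega
  have hmem := Nat.sInf_mem hS0
  rw [h0] at hmem
  obtain ⟨v, hvC, hv0, hvw⟩ := hmem
  clear h0 hS0
  -- step B : express v as combination of rows of G
  obtain ⟨hli, hspan⟩ := hG
  have hvmem : v ∈ Submodule.span (Polynomial F) (Set.range fun i : Fin k => fun t => G i t) := by
    rw [hspan]; exact hvC
  obtain ⟨c, hc⟩ := (Submodule.mem_span_range_iff_exists_fun _).mp hvmem
  -- step C : candidate codeword in Cbar
  set w : Fin n → Polynomial F :=
    ∑ i, (Polynomial.C ((c i).coeff 0) * (1 - Polynomial.X ^ (ν + 1 - ℓ))) • Gbar i with hwdef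
  have hwmem : w ∈ Cbar := by
    refine Submodule.sum_mem _ fun i _ => Submodule.smul_mem _ _ ?_
    exact Submodule.subset_span ⟨i, rfl⟩
  have hwt : ∀ t, w t = ∑ i, (Polynomial.C ((c i).coeff 0) * (1 - Polynomial.X ^ (ν + 1 - ℓ))) * Gbar i t := by
    intro t
    rw [hwdef]
    simp [Finset.sum_apply]
  have hvt : ∀ t, v t = ∑ i, c i * G i t := by
    intro t
    rw [← hc]
    simp [Finset.sum_apply]
  -- step D : coefficient 0 of w equals that of v
  have hw0 : ∀ t, (w t).coeff 0 = (v t).coeff 0 := by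
    intro t
    rw [hwt t, hvt t, Polynomial.finset_sum_coeff, Polynomial.finset_sum_coeff]
    refine Finset.sum_congr rfl fun i _ => ?_
    rw [Polynomial.mul_coeff_zero, Polynomial.mul_coeff_zero, Polynomial.mul_coeff_zero]
    have h1 : ((1 : Polynomial F) - Polynomial.X ^ (ν + 1 - ℓ)).coeff 0 = 1 := by
      rw [Polynomial.coeff_sub, Polynomial.coeff_X_pow, if_neg (by omega), Polynomial.coeff_one]
      norm_num
    have h2 : (Gbar i t).coeff 0 = (G i t).coeff 0 := by
      rw [hGbar]
      simp only [Polynomial.coeff_add, Polynomial.coeff_C_mul, Polynomial.coeff_X_pow]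
      rw [if_neg (by omega)]
      ring
    rw [h1, h2, Polynomial.coeff_C_zero]
    ring
  have hwne : (fun t => (w t).coeff 0) ≠ (0 : Fin n → F) := by
    have : (fun t => (w t).coeff 0) = (fun t => (v t).coeff 0) := funext hw0
    rw [this]; exact hv0
  -- step D' : coefficient (ν+1) of w vanishes
  have hwtop : ∀ t, (w t).coeff (ν + 1) = 0 := by
    intro t
    rw [hwt t, Polynomial.finset_sum_coeff]
    refine Finset.sum_eq_zero fun i _ => ?_
    have hexp : (Polynomial.C ((c i).coeff 0) * (1 - Polynomial.X ^ (ν + 1 - ℓ))) * Gbar i t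
        = Polynomial.C ((c i).coeff 0) *
          (G i t + Polynomial.C ((G i t).coeff ℓ) * Polynomial.X ^ (ν + 1)
            - Polynomial.X ^ (ν + 1 - ℓ) * G i t
            - Polynomial.C ((G i t).coeff ℓ) * (Polynomial.X ^ (ν + 1 - ℓ) * Polynomial.X ^ (ν + 1))) := by
      rw [hGbar]; ring
    rw [hexp, Polynomial.coeff_C_mul, Polynomial.coeff_sub, Polynomial.coeff_sub,
      Polynomial.coeff_add]
    have h1 : (G i t).coeff (ν + 1) = 0 := by
      have := hsupp (ν + 1) (by omega)
      exact congrFun (congrFun this i) t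
    have h2 : (Polynomial.C ((G i t).coeff ℓ) * Polynomial.X ^ (ν + 1)).coeff (ν + 1)
        = (G i t).coeff ℓ := by
      rw [Polynomial.coeff_C_mul, Polynomial.coeff_X_pow, if_pos rfl, mul_one]
    have h3 : (Polynomial.X ^ (ν + 1 - ℓ) * G i t).coeff (ν + 1) = (G i t).coeff ℓ := by
      have he : ν + 1 = ℓ + (ν + 1 - ℓ) := by omega
      calc (Polynomial.X ^ (ν + 1 - ℓ) * G i t).coeff (ν + 1)
          = (Polynomial.X ^ (ν + 1 - ℓ) * G i t).coeff (ℓ + (ν + 1 - ℓ)) := by rw [← he]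
        _ = (G i t).coeff ℓ := Polynomial.coeff_X_pow_mul _ _ _
    have h4 : (Polynomial.C ((G i t).coeff ℓ) *
        (Polynomial.X ^ (ν + 1 - ℓ) * Polynomial.X ^ (ν + 1))).coeff (ν + 1) = 0 := by
      rw [← pow_add, Polynomial.coeff_C_mul, Polynomial.coeff_X_pow, if_neg (by omega), mul_zero]
    rw [h1, h2, h3, h4]
    ring
  -- step E : count the weight
  set S0 : Finset (Fin n) := Finset.univ.filter (fun t => (v t).coeff 0 ≠ 0) with hS0def
  have hcard0 : S0.card = (n - k) * 1 + 1 := by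
    have hset : {p : ℕ × Fin n | p.1 ≤ 0 ∧ (v p.2).coeff p.1 ≠ 0}
        = ↑(({0} : Finset ℕ) ×ˢ S0) := by
      ext ⟨d, t⟩
      simp only [Set.mem_setOf_eq, Finset.coe_product, Set.mem_prod, Finset.coe_singleton,
        Set.mem_singleton_iff, hS0def, Finset.coe_filter, Finset.mem_univ, true_and,
        Set.mem_setOf_eq, Nat.le_zero]
      constructor
      · rintro ⟨rfl, h⟩; exact ⟨rfl, h⟩
      · rintro ⟨rfl, h⟩; exact ⟨rfl, h⟩
    have : wtTrunc 0 v = (({0} : Finset ℕ) ×ˢ S0).card := by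
      rw [wtTrunc, hset, Set.ncard_coe_finset]
    rw [← hvw] at this
    rw [Finset.card_product, Finset.card_singleton, one_mul] at this
    omega
  have hwbound : wtTrunc (ν + 1) w ≤ (n - k) * 1 + 1 + ν * n := by
    have hsub : {p : ℕ × Fin n | p.1 ≤ ν + 1 ∧ (w p.2).coeff p.1 ≠ 0}
        ⊆ ↑((({0} : Finset ℕ) ×ˢ S0) ∪ ((Finset.Icc 1 ν) ×ˢ (Finset.univ : Finset (Fin n)))) := by
      rintro ⟨d, t⟩ ⟨hd, hne⟩
      simp only [Finset.coe_union, Set.mem_union, Finset.coe_product, Set.mem_prod,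
        Finset.coe_singleton, Set.mem_singleton_iff, hS0def, Finset.coe_filter,
        Finset.mem_univ, true_and, Set.mem_setOf_eq, Finset.coe_Icc, Set.mem_Icc]
      rcases Nat.eq_or_lt_of_le (Nat.zero_le d) with h0d | h0d
      · left
        refine ⟨h0d.symm, ?_⟩
        rw [← h0d] at hne
        rw [← hw0 t]
        exact hne
      · right
        refine ⟨⟨h0d, ?_⟩, Finset.mem_coe.mpr (Finset.mem_univ t)⟩
        by_contra hdd
        have : d = ν + 1 := by omega
        rw [this] at hne
        exact hne (hwtop t)
    calc wtTrunc (ν + 1) w ≤ ((({0} : Finset ℕ) ×ˢ S0)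
          ∪ ((Finset.Icc 1 ν) ×ˢ (Finset.univ : Finset (Fin n)))).card := by
          rw [wtTrunc, ← Set.ncard_coe_finset]
          exact Set.ncard_le_ncard hsub (Finset.finite_toSet _)
      _ ≤ ((({0} : Finset ℕ) ×ˢ S0)).card
          + ((Finset.Icc 1 ν) ×ˢ (Finset.univ : Finset (Fin n))).card := Finset.card_union_le _ _
      _ = (n - k) * 1 + 1 + ν * n := by
          rw [Finset.card_product, Finset.card_product, Finset.card_singleton, one_mul, hcard0,
            Nat.card_Icc, Finset.card_univ, Fintype.card_fin]
          norm_num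
  -- first conjunct
  have hcd : colDist Cbar (ν + 1) ≤ n * (ν + 1) - k + 1 := by
    have hle : colDist Cbar (ν + 1) ≤ wtTrunc (ν + 1) w :=
      Nat.sInf_le ⟨w, hwmem, hwne, rfl⟩
    have harith : (n - k) * 1 + 1 + ν * n ≤ n * (ν + 1) - k + 1 := by
      have e1 : n * (ν + 1) = ν * n + n := by ring
      omega
    omega
  have hmid : n * (ν + 1) - k + 1 < (n - k) * (ν + 2) + 1 := by
    have e1 : n * (ν + 1) = n * ν + n := by ring
    have e2 : (n - k) * (ν + 2) = n * (ν + 2) - k * (ν + 2) := Nat.sub_mul n k (ν + 2)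
    have e3 : n * (ν + 2) = n * ν + 2 * n := by ring
    have e4 : k * (ν + 2) = k * ν + 2 * k := by ring
    have e5 : k * ν + k < n := by
      have h : (ν + 1) * k = k * ν + k := by ring
      have hn2 := hn
      rw [h] at hn2
      exact hn2
    omega
  refine ⟨hcd, hmid, ?_⟩
  intro hMDPbar
  have hj : ν + 1 ≤ δ / k + δ / (n - k) := by
    have hdk : δ / k = ν + 1 := by
      rw [hδ, Nat.mul_div_cancel _ hk]
    rw [hdk]
    exact Nat.le_add_right _ _
  have hval := hMDPbar (ν + 1) hj
  rw [hval] at hcd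
  have e : (n - k) * (ν + 1 + 1) = (n - k) * (ν + 2) := by ring
  rw [e] at hcd
  omega
end
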